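/- arXiv:2401.10429 — 13 statements merged into one kernel-verified Lean document; each statement's English description precedes it below -/
import Mathlib

section
/- Let K be a closed convex cone in a finite-dimensional real inner product space E with dual cone K* = {s : ⟨s,x⟩ ≥ 0 for all x ∈ K}, and let L ⊆ E be a linear subspace with orthogonal complement L⊥. Then L ∩ int K = ∅ if and only if L⊥ ∩ (K* \ {0}) ≠ ∅. -/
open scoped RealInnerProductSpace

/-- A continuous linear functional positive on the interior of a convex set is
nonnegative on the set itself. -/
lemma nonneg_on_of_pos_on_interior {E : Type*} [NormedAddCommGroup E]
    [InnerProductSpace ℝ E] {K : Set E} (hKconv : Convex ℝ K)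
    {s : E} (hpos : ∀ z ∈ interior K, 0 < ⟪s, z⟫) {x : E} (hx : x ∈ K)
    {y : E} (hy : y ∈ interior K) : 0 ≤ ⟪s, x⟫ := by
  have key : ∀ t : ℝ, t ∈ Set.Ioc (0:ℝ) 1 → 0 ≤ ⟪s, x⟫ + t * ⟪s, y - x⟫ := by
    intro t ht
    have := hpos _ (hKconv.add_smul_sub_mem_interior hx hy ht)
    rw [inner_add_right, real_inner_smul_right] at this
    linarith
  have htend : Filter.Tendsto (fun t : ℝ => ⟪s, x⟫ + t * ⟪s, y - x⟫)
      (nhdsWithin 0 (Set.Ioc (0:ℝ) 1)) (nhds ⟪s, x⟫) := by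
    have : Continuous (fun t : ℝ => ⟪s, x⟫ + t * ⟪s, y - x⟫) := by continuity
    simpa using (this.tendsto 0).mono_left nhdsWithin_le_nhds
  have hne : (nhdsWithin (0:ℝ) (Set.Ioc 0 1)).NeBot := by
    apply mem_closure_iff_nhdsWithin_neBot.mp
    have : (0:ℝ) ∈ closure (Set.Ioc (0:ℝ) 1) := by
      rw [closure_Ioc one_ne_zero.symm]; constructor <;> norm_num
    exact this
  exact ge_of_tendsto htend (eventually_nhdsWithin_of_forall key)

/-- For a closed convex self-dual cone `K` with nonempty interior in a
finite-dimensional real inner product space, and a linear subspace `L`,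
`L ∩ int K = ∅` iff `L⊥ ∩ (K* \ {0}) ≠ ∅`. -/
theorem stmt0 {E : Type*} [NormedAddCommGroup E] [InnerProductSpace ℝ E]
    [FiniteDimensional ℝ E] (K : Set E)
    (hKclosed : IsClosed K) (hKconv : Convex ℝ K)
    (hKcone : ∀ x ∈ K, ∀ t : ℝ, 0 ≤ t → t • x ∈ K)
    (hKint : (interior K).Nonempty)
    (hKselfdual : {s : E | ∀ x ∈ K, 0 ≤ ⟪s, x⟫} = K)
    (L : Submodule ℝ E) :
    (L : Set E) ∩ interior K = ∅ ↔
      ((Lᗮ : Set E) ∩ ({s : E | ∀ x ∈ K, 0 ≤ ⟪s, x⟫} \ {0})).Nonempty := by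
  obtain ⟨y, hy⟩ := hKint
  constructor
  · intro hdisj
    -- separate the open convex set `interior K` from `L`
    obtain ⟨f, u, hfK, hfL⟩ := geometric_hahn_banach_open (hKconv.interior) isOpen_interior
      (L.convex) (Set.disjoint_iff_inter_eq_empty.mpr
        (by rw [Set.inter_comm]; exact hdisj))
    -- `f` vanishes on `L`
    have hu0 : u ≤ 0 := by simpa using hfL 0 (L.zero_mem)
    have hfL0 : ∀ b ∈ L, f b = 0 := by
      intro b hb
      by_contra hfb
      rcases lt_or_gt_of_ne hfb with h | h
      · -- scale b by large positive factor
        have := hfL (((u - 1) / f b) • b) (L.smul_mem _ hb)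
        rw [map_smul, smul_eq_mul, div_mul_cancel₀ _ hfb] at this
        linarith
      · have := hfL (((u - 1) / f b) • b) (L.smul_mem _ hb)
        rw [map_smul, smul_eq_mul, div_mul_cancel₀ _ (ne_of_gt h)] at this
        linarith
    -- represent `-f` by a vector `s`
    set s : E := (InnerProductSpace.toDual ℝ E).symm (-f) with hs
    have hsx : ∀ x : E, ⟪s, x⟫ = -(f x) := by
      intro x
      rw [hs, InnerProductSpace.toDual_symm_apply]
      simp
    have hpos : ∀ z ∈ interior K, 0 < ⟪s, z⟫ := by
      intro z hz
      rw [hsx]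
      have := hfK z hz
      linarith
    refine ⟨s, ?_, ?_, ?_⟩
    · -- s ∈ Lᗮ
      intro b hb
      rw [real_inner_comm, hsx, hfL0 b hb, neg_zero]
    · intro x hx
      exact nonneg_on_of_pos_on_interior hKconv hpos hx hy
    · -- s ≠ 0
      simp only [Set.mem_singleton_iff]
      intro h0
      have := hpos y hy
      rw [h0, inner_zero_left] at this
      exact lt_irrefl _ this
  · rintro ⟨s, hsL, hsK, hs0⟩ 
    -- suppose x ∈ L ∩ int K; derive contradiction
    rw [Set.eq_empty_iff_forall_notMem]
    rintro x ⟨hxL, hxK⟩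
    have hzero : ⟪s, x⟫ = 0 := by
      rw [real_inner_comm]
      exact (Submodule.mem_orthogonal L s).mp hsL x hxL
    -- x ∈ interior K, s ∈ K* \ {0}: show ⟪s,x⟫ > 0
    have hs0' : s ≠ 0 := by simpa using hs0
    obtain ⟨ε, hε, hball⟩ := Metric.isOpen_iff.mp isOpen_interior x hxK
    have hmem : x - (ε / (2 * ‖s‖)) • s ∈ K := by
      apply interior_subset
      apply hball
      rw [Metric.mem_ball, dist_eq_norm]
      have hns : 0 < ‖s‖ := norm_pos_iff.mpr hs0'
      have : ‖x - (ε / (2 * ‖s‖)) • s - x‖ = (ε / (2 * ‖s‖)) * ‖s‖ := by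
        rw [sub_sub_cancel_left, norm_neg, norm_smul, Real.norm_eq_abs,
          abs_of_pos (by positivity)]
      rw [this, div_mul_eq_mul_div, mul_comm (2:ℝ) ‖s‖, ← div_div,
        mul_div_assoc, div_self (ne_of_gt hns), mul_one]
      linarith
    have := hsK _ hmem
    rw [inner_sub_right, hzero, real_inner_smul_right, real_inner_self_eq_norm_sq] at this
    have hns : 0 < ‖s‖ := norm_pos_iff.mpr hs0'
    nlinarith [sq_nonneg ‖s‖, mul_pos (div_pos hε (by positivity : (0:ℝ) < 2 * ‖s‖)) (mul_pos hns hns)]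
end

section
/- With A(θ)(x,τ,ρ) = (Ax − τb, ⟨c,x⟩ − τθ + ρ) and K̄ = K × ℝ₊ × ℝ₊, the set ker A(θ) ∩ int K̄ is nonempty if and only if (P) is strongly feasible (there exists x ∈ int K with Ax = b) and the optimal value θ_p = inf{⟨c,x⟩ : Ax = b, x ∈ K} satisfies θ_p < θ. -/
open scoped RealInnerProductSpace Pointwise

/-- `ker A(θ) ∩ int K̄` is nonempty iff (P) is strongly feasible and its
optimal value `θ_p = inf {⟨c,x⟩ : Ax = b, x ∈ K}` (computed in `EReal`, so `+∞` if
infeasible) satisfies `θ_p < θ`. -/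
theorem stmt3 {E : Type*} [NormedAddCommGroup E] [InnerProductSpace ℝ E]
    [FiniteDimensional ℝ E] {m : ℕ} (K : Set E)
    (hKclosed : IsClosed K) (hKconv : Convex ℝ K)
    (hKcone : ∀ z ∈ K, ∀ t : ℝ, 0 ≤ t → t • z ∈ K)
    (hKint : (interior K).Nonempty)
    (hKselfdual : {s : E | ∀ z ∈ K, 0 ≤ ⟪s, z⟫} = K)
    (A : E →ₗ[ℝ] EuclideanSpace ℝ (Fin m)) (b : EuclideanSpace ℝ (Fin m)) (c : E)
    (θ : ℝ) :
    (∃ x : E, ∃ τ ρ : ℝ, A x = τ • b ∧ ⟪c, x⟫ - τ * θ + ρ = 0 ∧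
        x ∈ interior K ∧ 0 < τ ∧ 0 < ρ) ↔
      (∃ x, x ∈ interior K ∧ A x = b) ∧
        sInf {v : EReal | ∃ x, A x = b ∧ x ∈ K ∧ v = (⟪c, x⟫ : EReal)} < (θ : EReal) := by
  have hsmul : ∀ t : ℝ, 0 < t → ∀ x ∈ interior K, t • x ∈ interior K := by
    intro t ht x hx
    have h1 : t • K ⊆ K := by
      rintro _ ⟨z, hz, rfl⟩
      exact hKcone z hz t ht.le
    have : t • x ∈ t • interior K := ⟨x, hx, rfl⟩
    rw [← interior_smul₀ ht.ne' K] at this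
    exact interior_mono h1 this
  constructor
  · rintro ⟨x, τ, ρ, hA, heq, hx, hτ, hρ⟩
    have hx' : τ⁻¹ • x ∈ interior K := hsmul _ (inv_pos.mpr hτ) _ hx
    have hA' : A (τ⁻¹ • x) = b := by
      rw [map_smul, hA, smul_smul, inv_mul_cancel₀ hτ.ne', one_smul]
    have hval : ⟪c, τ⁻¹ • x⟫ < θ := by
      rw [real_inner_smul_right]
      have : ⟪c, x⟫ = τ * θ - ρ := by linarith
      rw [this]
      rw [inv_mul_eq_div, div_lt_iff₀ hτ]
      nlinarith
    refine ⟨⟨_, hx', hA'⟩, ?_⟩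
    calc sInf {v : EReal | ∃ x, A x = b ∧ x ∈ K ∧ v = (⟪c, x⟫ : EReal)}
        ≤ (⟪c, τ⁻¹ • x⟫ : EReal) := sInf_le ⟨_, hA', interior_subset hx', rfl⟩
      _ < (θ : EReal) := by exact_mod_cast hval
  · rintro ⟨⟨x₀, hx₀, hAx₀⟩, hinf⟩
    obtain ⟨v, ⟨x₁, hAx₁, hx₁K, rfl⟩, hv⟩ := sInf_lt_iff.mp hinf
    have hv' : ⟪c, x₁⟫ < θ := by exact_mod_cast hv
    set d : ℝ := θ - ⟪c, x₁⟫ with hd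
    have hdpos : 0 < d := by simp [hd]; linarith
    set δ : ℝ := ⟪c, x₀⟫ - ⟪c, x₁⟫ with hδ
    set ε : ℝ := min 1 (d / (|δ| + 1)) with hε
    have hεpos : 0 < ε := lt_min one_pos (div_pos hdpos (by positivity))
    have hεle : ε ≤ 1 := min_le_left _ _
    have hεδ : ε * δ < d := by
      calc ε * δ ≤ ε * |δ| := mul_le_mul_of_nonneg_left (le_abs_self δ) hεpos.le
        _ ≤ (d / (|δ| + 1)) * |δ| :=
            mul_le_mul_of_nonneg_right (min_le_right _ _) (abs_nonneg δ)
        _ < d := by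
            rw [div_mul_eq_mul_div, div_lt_iff₀ (by positivity)]
            nlinarith [abs_nonneg δ]
    set x : E := ε • x₀ + (1 - ε) • x₁ with hxdef
    have hxint : x ∈ interior K :=
      hKconv.combo_interior_self_mem_interior hx₀ hx₁K hεpos (by linarith) (by ring)
    have hAx : A x = b := by
      rw [hxdef, map_add, map_smul, map_smul, hAx₀, hAx₁, ← add_smul]
      simp
    have hcx : ⟪c, x⟫ = ⟪c, x₁⟫ + ε * δ := by
      rw [hxdef, inner_add_right, real_inner_smul_right, real_inner_smul_right]
      simp only [hδ]; ring
    refine ⟨x, 1, θ - ⟪c, x⟫, ?_, by ring, hxint, one_pos, ?_⟩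
    · rw [hAx, one_smul]
    · rw [hcx]; simp only [hd] at hdpos hεδ ⊢; linarith
end

section
/- Let (z, ω, κ) be a nonzero element of range A(θ)* ∩ K̄, where A(θ)* is the adjoint of A(θ)(x,τ,ρ) = (Ax − τb, ⟨c,x⟩ − τθ + ρ) and K̄ = K × ℝ₊ × ℝ₊. Then there exists y ∈ ℝ^m with z = A*y + κc and ω = −b^⊤y − κθ, and exactly one of the following holds: (1) κ > 0, in which case (−(1/κ)y, c − A*(−(1/κ)y)) is a feasible solution to the dual (D) with b^⊤(−(1/κ)y) ≥ θ; (2) κ = 0 and ω > 0, in which case −y is an improving ray of (D): −A*(−y) ∈ K and b^⊤(−y) > 0; (3) κ = ω = 0, in which case −y is a reducing direction for (P): −A*(−y) ∈ K \ {0} and b^⊤(−y) = 0. -/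
open scoped RealInnerProductSpace

/-- Let `(z, ω, κ)` be a nonzero element of `range A(θ)* ∩ K̄`, where
`A(θ)*(y,γ) = (A*y + γc, −b^⊤y − γθ, γ)` and `K̄ = K × ℝ₊ × ℝ₊`.  Then there is `y` with
`z = A*y + κc`, `ω = −b^⊤y − κθ`, and exactly one of the following holds:
(1) `κ > 0` and `(−(1/κ)y, c − A*(−(1/κ)y))` is feasible for (D) with value `≥ θ`;
(2) `κ = 0`, `ω > 0`, and `−y` is an improving ray of (D);
(3) `κ = ω = 0` and `−y` is a reducing direction for (P). -/
theorem stmt4 {E : Type*} [NormedAddCommGroup E] [InnerProductSpace ℝ E]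
    [FiniteDimensional ℝ E] {m : ℕ} (K : Set E)
    (hKclosed : IsClosed K) (hKconv : Convex ℝ K)
    (hKcone : ∀ z ∈ K, ∀ t : ℝ, 0 ≤ t → t • z ∈ K)
    (hKint : (interior K).Nonempty)
    (hKselfdual : {s : E | ∀ z ∈ K, 0 ≤ ⟪s, z⟫} = K)
    (A : E →ₗ[ℝ] EuclideanSpace ℝ (Fin m)) (b : EuclideanSpace ℝ (Fin m)) (c : E)
    (θ : ℝ) (z : E) (ω κ : ℝ)
    (hrange : ∃ (y : EuclideanSpace ℝ (Fin m)) (γ : ℝ),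
        z = (LinearMap.adjoint A) y + γ • c ∧ ω = -⟪b, y⟫ - γ * θ ∧ κ = γ)
    (hzK : z ∈ K) (hω : 0 ≤ ω) (hκ : 0 ≤ κ)
    (hne : ¬(z = 0 ∧ ω = 0 ∧ κ = 0)) :
    ∃ y : EuclideanSpace ℝ (Fin m),
      z = (LinearMap.adjoint A) y + κ • c ∧ ω = -⟪b, y⟫ - κ * θ ∧
      ((0 < κ ∧ c - (LinearMap.adjoint A) (-(κ⁻¹ • y)) ∈ K ∧ θ ≤ ⟪b, -(κ⁻¹ • y)⟫) ∨
        (κ = 0 ∧ 0 < ω ∧ -((LinearMap.adjoint A) (-y)) ∈ K ∧ 0 < ⟪b, -y⟫) ∨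
        (κ = 0 ∧ ω = 0 ∧ -((LinearMap.adjoint A) (-y)) ∈ K ∧
          -((LinearMap.adjoint A) (-y)) ≠ 0 ∧ ⟪b, -y⟫ = 0)) := by
  obtain ⟨y, κ, h1, h2, rfl⟩ := hrange
  refine ⟨y, h1, h2, ?_⟩
  rcases lt_or_eq_of_le hκ with hpos | hzero
  · left
    refine ⟨hpos, ?_, ?_⟩
    · have he : c - (LinearMap.adjoint A) (-(κ⁻¹ • y)) = κ⁻¹ • z := by
        rw [h1]; simp [smul_add, smul_smul, inv_mul_cancel₀ hpos.ne']; abel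
      rw [he]
      exact hKcone z hzK κ⁻¹ (inv_nonneg.mpr hpos.le)
    · have hb : κ * θ ≤ -⟪b, y⟫ := by linarith
      have he : ⟪b, -(κ⁻¹ • y)⟫ = κ⁻¹ * (-⟪b, y⟫) := by
        simp [inner_smul_right]
      rw [he]
      rw [← sub_nonneg] at hb
      have h3 := mul_nonneg (inv_nonneg.mpr hpos.le) hb
      have hg : κ⁻¹ * κ = 1 := inv_mul_cancel₀ hpos.ne'
      have h4 : κ⁻¹ * (-⟪b, y⟫ - κ * θ) = κ⁻¹ * (-⟪b, y⟫) - (κ⁻¹ * κ) * θ := by ring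
      rw [hg] at h4
      linarith
  · subst hzero
    have hz : z = (LinearMap.adjoint A) y := by simpa using h1
    have hzne : -((LinearMap.adjoint A) (-y)) = z := by simp [hz]
    have hbω : ⟪b, -y⟫ = ω := by rw [inner_neg_right]; linarith
    rcases lt_or_eq_of_le hω with hωpos | hωzero
    · right; left
      exact ⟨rfl, hωpos, hzne ▸ hzK, hbω ▸ hωpos⟩
    · right; right
      have hzne0 : z ≠ 0 := fun h => hne ⟨h, hωzero.symm, rfl⟩
      exact ⟨rfl, hωzero.symm, hzne ▸ hzK, hzne ▸ hzne0, hbω.trans hωzero.symm⟩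
end

section
/- Suppose (P) is strongly feasible, (D) is feasible, and θ equals the common optimal value θ_p. Then range A(θ)* ∩ (K̄ \ {0}) ≠ ∅, and every nonzero (z,ω,κ) ∈ range A(θ)* ∩ K̄ has κ > 0; writing z = A*y + κc, the point (−(1/κ)y, (1/κ)z) is an optimal solution of (D). -/
/-!
Slater's argument. Since (P) has a feasible point in `int K`, the open convex set
`{(x, t) : x ∈ int K, ⟪c, x⟫ < t}` and the convex set `{(x, t) : A x = b, t ≤ θ}` in `E × ℝ` are
disjoint; a separating functional is bounded below on the affine set `A x = b`, hence of the
form `(x, t) ↦ ⟪y, A x⟫ - γ t`, and the interior feasible point forces `γ > 0`. This gives a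
Lagrange multiplier `y` with `θ ≤ ⟪c, x⟫ - ⟪y, A x - b⟫` on `K`; since `K` is a self-dual cone,
`y` is dual feasible with `⟪b, y⟫ ≥ θ`, so (D) attains `θ`, and `(c - A* y, ⟪b, y⟫ - θ, 1)` is a
nonzero point of `range A(θ)* ∩ K̄`.

Conversely, a point with `κ = 0` has `A* y ∈ K` and `⟪b, y⟫ ≤ 0`; pairing `A* y` with the
interior feasible point, where `⟪A* y, ·⟫` would have a local minimum, forces `A* y = 0` and
`⟪b, y⟫ = 0`. For `κ > 0`, dividing by `κ` gives a dual feasible point of value at least `θ`,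
which is optimal by weak duality.
-/

open scoped RealInnerProductSpace

theorem nonneg_of_forall_le_add_mul {C a d : ℝ} (h : ∀ t : ℝ, 0 ≤ t → C ≤ a + t * d) :
    0 ≤ d := by
  by_contra! hd
  have hstep : |a - C + 1| / -d * d = -|a - C + 1| := by field_simp [hd.ne]
  linarith [h _ (div_nonneg (abs_nonneg (a - C + 1)) (neg_nonneg.2 hd.le)),
    le_abs_self (a - C + 1)]

theorem eq_zero_of_forall_le_add_mul {C a d : ℝ} (h : ∀ t : ℝ, C ≤ a + t * d) : d = 0 := by
  have hd : 0 ≤ d := nonneg_of_forall_le_add_mul fun t _ ↦ h t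
  have hnd : 0 ≤ -d := nonneg_of_forall_le_add_mul (C := C) (a := a) fun t _ ↦ by
    linarith [h (-t)]
  linarith

theorem EReal.isGLB_of_coe_eq_sInf {S : Set ℝ} {θ : ℝ}
    (h : (θ : EReal) = sInf ((↑) '' S)) : IsGLB S θ := by
  refine ⟨fun r hr ↦ ?_, fun r hr ↦ ?_⟩
  · exact EReal.coe_le_coe_iff.1 (h ▸ sInf_le (Set.mem_image_of_mem _ hr))
  · exact EReal.coe_le_coe_iff.1 (h ▸ le_sInf (Set.forall_mem_image.2 fun s hs ↦
      EReal.coe_le_coe_iff.2 (hr hs)))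

theorem Convex.forall_le_of_forall_interior_le {E : Type*} [AddCommGroup E] [Module ℝ E]
    [TopologicalSpace E] [IsTopologicalAddGroup E] [ContinuousSMul ℝ E] {K : Set E} (hK : Convex ℝ K)
    (hKint : (interior K).Nonempty) {g : E → ℝ} (hg : Continuous g) {θ : ℝ}
    (h : ∀ x ∈ interior K, θ ≤ g x) : ∀ x ∈ K, θ ≤ g x := by
  have hcl : closure (interior K) ⊆ {x | θ ≤ g x} :=
    closure_minimal h (isClosed_le continuous_const hg)
  rw [hK.closure_interior_eq_closure_of_nonempty_interior hKint] at hcl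
  exact fun x hx ↦ hcl (subset_closure hx)

section

variable {E F : Type*} [NormedAddCommGroup E] [InnerProductSpace ℝ E]
  [NormedAddCommGroup F] [InnerProductSpace ℝ F]

theorem eq_zero_of_inner_nonneg_of_mem_interior {K : Set E} {z x₀ : E}
    (hx₀ : x₀ ∈ interior K) (hz : ∀ w ∈ K, 0 ≤ ⟪z, w⟫) (hzx₀ : ⟪z, x₀⟫ ≤ 0) : z = 0 := by
  have hmin : IsLocalMin (fun x ↦ ⟪z, x⟫) x₀ :=
    Filter.mem_of_superset (mem_interior_iff_mem_nhds.1 hx₀) fun w hw ↦ hzx₀.trans (hz w hw)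
  have hzero := hmin.hasFDerivAt_eq_zero (innerSL ℝ z).hasFDerivAt
  simpa using congrArg (fun φ ↦ φ z) hzero

variable [FiniteDimensional ℝ E] [FiniteDimensional ℝ F]

theorem exists_inner_comp_eq_of_bddBelow (A : E →ₗ[ℝ] F) (φ : E →L[ℝ] ℝ) {b : F} {x₀ : E}
    (hx₀ : A x₀ = b) {C : ℝ} (h : ∀ x, A x = b → C ≤ φ x) : ∃ y : F, ∀ x, φ x = ⟪y, A x⟫ := by
  set w := (InnerProductSpace.toDual ℝ E).symm φ
  have hw : w ∈ (LinearMap.ker A)ᗮ := by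
    refine (Submodule.mem_orthogonal' _ _).2 fun k hk ↦ ?_
    rw [InnerProductSpace.toDual_symm_apply]
    refine eq_zero_of_forall_le_add_mul (C := C) (a := φ x₀) fun t ↦ ?_
    simpa [map_add, map_smul, LinearMap.mem_ker.1 hk, hx₀] using h (x₀ + t • k)
  obtain ⟨y, hy⟩ := (LinearMap.orthogonal_ker A ▸ hw : w ∈ (LinearMap.adjoint A).range)
  refine ⟨y, fun x ↦ ?_⟩
  rw [← LinearMap.adjoint_inner_left, hy, InnerProductSpace.toDual_symm_apply]

theorem exists_lagrange_multiplier_interior {K : Set E} (hK : Convex ℝ K) (A : E →ₗ[ℝ] F)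
    (b : F) (c : E) {θ : ℝ} {x₀ : E} (hx₀ : x₀ ∈ interior K) (hAx₀ : A x₀ = b)
    (hθ : ∀ x ∈ K, A x = b → θ ≤ ⟪c, x⟫) :
    ∃ y : F, ∀ x ∈ interior K, θ ≤ ⟪c, x⟫ - ⟪y, A x - b⟫ := by
  set S : Set (E × ℝ) := Prod.fst ⁻¹' interior K ∩ {p | ⟪c, p.1⟫ - p.2 < 0}
  set T : Set (E × ℝ) := (A ∘ₗ LinearMap.fst ℝ E ℝ) ⁻¹' {b} ∩ {p | p.2 ≤ θ}
  have hS_open : IsOpen S :=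
    (isOpen_interior.preimage continuous_fst).inter (isOpen_lt (by fun_prop) continuous_const)
  have hS_conv : Convex ℝ S :=
    (hK.interior.linear_preimage (LinearMap.fst ℝ E ℝ)).inter <| convex_halfSpace_lt
      ((innerₛₗ ℝ c ∘ₗ LinearMap.fst ℝ E ℝ - LinearMap.snd ℝ E ℝ).isLinear) 0
  have hT_conv : Convex ℝ T :=
    ((convex_singleton b).linear_preimage _).inter
      (convex_halfSpace_le (LinearMap.snd ℝ E ℝ).isLinear θ)
  have hST : Disjoint S T := by
    refine Set.disjoint_left.2 fun p ⟨hpK, hpc⟩ ⟨hpA, hpθ⟩ ↦ ?_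
    have := hθ p.1 (interior_subset hpK) hpA
    simp only [Set.mem_ofPred_eq] at hpc hpθ
    linarith
  obtain ⟨f, u, hfS, hfT⟩ := geometric_hahn_banach_open hS_conv hS_open hT_conv hST
  set γ := -f (0, 1)
  have hf : ∀ x t, f (x, t) = f (x, 0) - γ * t := fun x t ↦ by
    rw [show ((x, t) : E × ℝ) = (x, 0) + t • (0, 1) by simp, map_add, map_smul, smul_eq_mul]
    ring
  obtain ⟨y, hy⟩ := exists_inner_comp_eq_of_bddBelow A (f.comp (.inl ℝ E ℝ)) hAx₀
    (C := u + γ * θ) fun x hAx ↦ by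
      have := hfT (x, θ) ⟨hAx, le_refl θ⟩
      rw [hf] at this
      simp only [ContinuousLinearMap.comp_apply, ContinuousLinearMap.inl_apply]
      linarith
  have hfy : ∀ x t, f (x, t) = ⟪y, A x⟫ - γ * t := fun x t ↦ by rw [hf, ← hy]; rfl
  have hγ : 0 < γ := by
    set a := ⟪c, x₀⟫ + 1
    have hlt := (hfS (x₀, a) ⟨hx₀, by simp [a]⟩).trans_le
      (hfT (x₀, min θ a) ⟨hAx₀, min_le_left θ a⟩)
    rw [hfy, hfy] at hlt
    by_contra! hγ
    linarith [mul_le_mul_of_nonpos_left (min_le_right θ a) hγ]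
  refine ⟨γ⁻¹ • y, fun x hx ↦ le_of_forall_pos_lt_add fun ε hε ↦ ?_⟩
  have hlt := (hfS (x, ⟪c, x⟫ + ε) ⟨hx, by simpa⟩).trans_le (hfT (x₀, θ) ⟨hAx₀, le_refl θ⟩)
  rw [hfy, hfy, hAx₀] at hlt
  have key : γ⁻¹ * (⟪y, A x⟫ - ⟪y, b⟫) < ⟪c, x⟫ + ε - θ :=
    (inv_mul_lt_iff₀ hγ).2 (by linarith)
  rw [real_inner_smul_left, inner_sub_right]
  linarith

theorem exists_lagrange_multiplier {K : Set E} (hK : Convex ℝ K) (A : E →ₗ[ℝ] F)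
    (b : F) (c : E) {θ : ℝ} {x₀ : E} (hx₀ : x₀ ∈ interior K) (hAx₀ : A x₀ = b)
    (hθ : ∀ x ∈ K, A x = b → θ ≤ ⟪c, x⟫) :
    ∃ y : F, ∀ x ∈ K, θ ≤ ⟪c, x⟫ - ⟪y, A x - b⟫ := by
  obtain ⟨y, hy⟩ := exists_lagrange_multiplier_interior hK A b c hx₀ hAx₀ hθ
  have hA : Continuous A := A.continuous_of_finiteDimensional
  exact ⟨y, hK.forall_le_of_forall_interior_le ⟨x₀, hx₀⟩ (by fun_prop) hy⟩

theorem inner_sub_inner_map_sub_eq (A : E →ₗ[ℝ] F) (b : F) (c x : E) (y : F) :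
    ⟪c, x⟫ - ⟪y, A x - b⟫ = ⟪c - LinearMap.adjoint A y, x⟫ + ⟪b, y⟫ := by
  rw [inner_sub_left, LinearMap.adjoint_inner_left, inner_sub_right, real_inner_comm b]
  ring

theorem inner_le_inner_of_feasible {K : Set E} {A : E →ₗ[ℝ] F} {b : F} {c x : E} {y : F}
    (hx : x ∈ K) (hAx : A x = b) (hy : ∀ w ∈ K, 0 ≤ ⟪c - LinearMap.adjoint A y, w⟫) :
    ⟪b, y⟫ ≤ ⟪c, x⟫ := by
  have := inner_sub_inner_map_sub_eq A b c x y
  rw [hAx, sub_self, inner_zero_right, sub_zero] at this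
  linarith [hy x hx]

theorem dual_feasible_of_forall_le_lagrangian {K : Set E}
    (hK : ∀ z ∈ K, ∀ t : ℝ, 0 ≤ t → t • z ∈ K) (h0 : (0 : E) ∈ K) {A : E →ₗ[ℝ] F} {b : F}
    {c : E} {θ : ℝ} {y : F} (hy : ∀ x ∈ K, θ ≤ ⟪c, x⟫ - ⟪y, A x - b⟫) :
    (∀ w ∈ K, 0 ≤ ⟪c - LinearMap.adjoint A y, w⟫) ∧ θ ≤ ⟪b, y⟫ := by
  simp only [inner_sub_inner_map_sub_eq] at hy
  refine ⟨fun w hw ↦ nonneg_of_forall_le_add_mul (C := θ) (a := ⟪b, y⟫) fun t ht ↦ ?_,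
    by simpa using hy 0 h0⟩
  rw [← real_inner_smul_right, add_comm]
  exact hy _ (hK w hw t ht)

theorem adjoint_eq_zero_of_mem_interior {K : Set E} {A : E →ₗ[ℝ] F} {b : F} {x₀ : E}
    (hx₀ : x₀ ∈ interior K) (hAx₀ : A x₀ = b) {y : F}
    (hy : ∀ w ∈ K, 0 ≤ ⟪LinearMap.adjoint A y, w⟫) (hby : ⟪b, y⟫ ≤ 0) :
    LinearMap.adjoint A y = 0 ∧ ⟪b, y⟫ = 0 := by
  have hx₀y : ⟪LinearMap.adjoint A y, x₀⟫ = ⟪b, y⟫ := by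
    rw [LinearMap.adjoint_inner_left, hAx₀, real_inner_comm]
  have hzero := eq_zero_of_inner_nonneg_of_mem_interior hx₀ hy (hx₀y ▸ hby)
  exact ⟨hzero, by rw [← hx₀y, hzero, inner_zero_left]⟩

end

theorem stmt5_general {E : Type*} [NormedAddCommGroup E] [InnerProductSpace ℝ E]
    [FiniteDimensional ℝ E] {m : ℕ} (K : Set E)
    (hKconv : Convex ℝ K)
    (hKcone : ∀ z ∈ K, ∀ t : ℝ, 0 ≤ t → t • z ∈ K)
    (hKselfdual : {s : E | ∀ z ∈ K, 0 ≤ ⟪s, z⟫} = K)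
    (A : E →ₗ[ℝ] EuclideanSpace ℝ (Fin m)) (b : EuclideanSpace ℝ (Fin m)) (c : E)
    (θ : ℝ)
    (hPsf : ∃ x ∈ interior K, A x = b)
    (hθ : (θ : EReal) = sInf {v : EReal | ∃ x, A x = b ∧ x ∈ K ∧ v = (⟪c, x⟫ : EReal)}) :
    (∃ z : E, ∃ ω κ : ℝ,
      (∃ y γ, z = (LinearMap.adjoint A) y + γ • c ∧ ω = -⟪b, y⟫ - γ * θ ∧ κ = γ) ∧
      z ∈ K ∧ 0 ≤ ω ∧ 0 ≤ κ ∧ ¬(z = 0 ∧ ω = 0 ∧ κ = 0)) ∧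
    (∀ z : E, ∀ ω κ : ℝ,
      (∃ y γ, z = (LinearMap.adjoint A) y + γ • c ∧ ω = -⟪b, y⟫ - γ * θ ∧ κ = γ) →
      z ∈ K → 0 ≤ ω → 0 ≤ κ → ¬(z = 0 ∧ ω = 0 ∧ κ = 0) →
      0 < κ ∧ ∃ y, z = (LinearMap.adjoint A) y + κ • c ∧ ω = -⟪b, y⟫ - κ * θ ∧
        κ⁻¹ • z = c - (LinearMap.adjoint A) (-(κ⁻¹ • y)) ∧
        κ⁻¹ • z ∈ K ∧
        ∀ y' : EuclideanSpace ℝ (Fin m), c - (LinearMap.adjoint A) y' ∈ K →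
          ⟪b, y'⟫ ≤ ⟪b, -(κ⁻¹ • y)⟫) := by
  obtain ⟨x₀, hx₀, hAx₀⟩ := hPsf
  have hKdual (s : E) : s ∈ K ↔ ∀ w ∈ K, 0 ≤ ⟪s, w⟫ := (Set.ext_iff.1 hKselfdual s).symm
  have hglb : IsGLB ((fun x ↦ ⟪c, x⟫) '' {x | A x = b ∧ x ∈ K}) θ :=
    EReal.isGLB_of_coe_eq_sInf <| by
      rw [hθ, Set.image_image]
      congr 1
      ext
      simp [and_assoc, @eq_comm EReal]
  obtain ⟨y, hy⟩ := exists_lagrange_multiplier hKconv A b c hx₀ hAx₀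
    fun x hx hAx ↦ hglb.1 ⟨x, ⟨hAx, hx⟩, rfl⟩
  obtain ⟨hyK, hθy⟩ :=
    dual_feasible_of_forall_le_lagrangian hKcone ((hKdual 0).2 (by simp)) hy
  have hweak (y' : EuclideanSpace ℝ (Fin m)) (hy' : c - LinearMap.adjoint A y' ∈ K) :
      ⟪b, y'⟫ ≤ θ := hglb.2 <| by
    rintro _ ⟨x, ⟨hAx, hx⟩, rfl⟩
    exact inner_le_inner_of_feasible hx hAx ((hKdual _).1 hy')
  refine ⟨⟨c - LinearMap.adjoint A y, ⟪b, y⟫ - θ, 1, ⟨-y, 1, ?_, ?_, rfl⟩, (hKdual _).2 hyK,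
    sub_nonneg.2 hθy, zero_le_one, fun h ↦ one_ne_zero h.2.2⟩, ?_⟩
  · rw [map_neg, one_smul, neg_add_eq_sub]
  · rw [inner_neg_right, neg_neg, one_mul]
  rintro z ω κ ⟨y, κ, rfl, rfl, rfl⟩ hzK hω hκ hne
  have hκpos : 0 < κ := by
    refine hκ.lt_of_ne fun hκ0 ↦ hne ?_
    subst hκ0
    simp only [zero_smul, add_zero, zero_mul, sub_zero] at hzK hω ⊢
    obtain ⟨hy0, hby0⟩ :=
      adjoint_eq_zero_of_mem_interior hx₀ hAx₀ ((hKdual _).1 hzK) (neg_nonneg.1 hω)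
    exact ⟨hy0, by rw [hby0, neg_zero], trivial⟩
  refine ⟨hκpos, y, rfl, rfl, ?_, hKcone _ hzK _ (inv_nonneg.2 hκ),
    fun y' hy' ↦ (hweak y' hy').trans ?_⟩
  · rw [map_neg, map_smul, smul_add, smul_smul, inv_mul_cancel₀ hκpos.ne', one_smul]
    abel
  · rw [inner_neg_right, real_inner_smul_right, ← mul_neg, le_inv_mul_iff₀ hκpos]
    linarith

/-- If (P) is strongly feasible, (D) is feasible, and `θ` equals the
optimal value `θ_p` of (P), then `range A(θ)* ∩ (K̄ \ {0})` is nonempty, every nonzero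
`(z,ω,κ)` in `range A(θ)* ∩ K̄` has `κ > 0`, and writing `z = A*y + κc`, the point
`(−(1/κ)y, (1/κ)z)` is an optimal solution of (D). -/
theorem stmt5 {E : Type*} [NormedAddCommGroup E] [InnerProductSpace ℝ E]
    [FiniteDimensional ℝ E] {m : ℕ} (K : Set E)
    (hKclosed : IsClosed K) (hKconv : Convex ℝ K)
    (hKcone : ∀ z ∈ K, ∀ t : ℝ, 0 ≤ t → t • z ∈ K)
    (hKint : (interior K).Nonempty)
    (hKselfdual : {s : E | ∀ z ∈ K, 0 ≤ ⟪s, z⟫} = K)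
    (A : E →ₗ[ℝ] EuclideanSpace ℝ (Fin m)) (b : EuclideanSpace ℝ (Fin m)) (c : E)
    (θ : ℝ)
    (hPsf : ∃ x ∈ interior K, A x = b)
    (hDfeas : ∃ y, c - (LinearMap.adjoint A) y ∈ K)
    (hθ : (θ : EReal) = sInf {v : EReal | ∃ x, A x = b ∧ x ∈ K ∧ v = (⟪c, x⟫ : EReal)}) :
    (∃ z : E, ∃ ω κ : ℝ,
      (∃ y γ, z = (LinearMap.adjoint A) y + γ • c ∧ ω = -⟪b, y⟫ - γ * θ ∧ κ = γ) ∧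
      z ∈ K ∧ 0 ≤ ω ∧ 0 ≤ κ ∧ ¬(z = 0 ∧ ω = 0 ∧ κ = 0)) ∧
    (∀ z : E, ∀ ω κ : ℝ,
      (∃ y γ, z = (LinearMap.adjoint A) y + γ • c ∧ ω = -⟪b, y⟫ - γ * θ ∧ κ = γ) →
      z ∈ K → 0 ≤ ω → 0 ≤ κ → ¬(z = 0 ∧ ω = 0 ∧ κ = 0) →
      0 < κ ∧ ∃ y, z = (LinearMap.adjoint A) y + κ • c ∧ ω = -⟪b, y⟫ - κ * θ ∧
        κ⁻¹ • z = c - (LinearMap.adjoint A) (-(κ⁻¹ • y)) ∧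
        κ⁻¹ • z ∈ K ∧
        ∀ y' : EuclideanSpace ℝ (Fin m), c - (LinearMap.adjoint A) y' ∈ K →
          ⟪b, y'⟫ ≤ ⟪b, -(κ⁻¹ • y)⟫) :=
  stmt5_general K hKconv hKcone hKselfdual A b c θ hPsf hθ
end

section
/- Suppose (P) is strongly feasible and θ̄ ∈ ℝ satisfies θ_p < θ̄ ≤ θ_p + 1. Then for every θ with θ_p < θ < θ̄, any solution (x,τ,ρ) of ker A(θ) ∩ int K̄ with ‖(x,τ,ρ)‖_∞ ≤ 1 yields a solution (x, τ, τ(θ̄−θ)+ρ) of ker A(θ̄) ∩ int K̄ with ‖(x, τ, τ(θ̄−θ)+ρ)‖_∞ ≤ 1. Consequently, if every feasible solution (x̄,τ̄,ρ̄) of the θ̄-problem satisfies ⟨v,x̄⟩ ≤ ξ_x, τ̄ ≤ ξ_τ, ρ̄ ≤ ξ_ρ for some v ∈ K and constants ξ_x, ξ_τ, ξ_ρ < 1, then the same bounds hold for every feasible (x,τ,ρ) of the θ-problem. -/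
open scoped RealInnerProductSpace

/-- The optimal value `θ_p` of (P): `inf {⟨c,x⟩ : Ax = b, x ∈ K}` in `EReal`
(so `+∞` if (P) is infeasible). -/
noncomputable def thetaP {E : Type*} [NormedAddCommGroup E] [InnerProductSpace ℝ E]
    {m : ℕ} (K : Set E) (A : E →ₗ[ℝ] EuclideanSpace ℝ (Fin m))
    (b : EuclideanSpace ℝ (Fin m)) (c : E) : EReal :=
  sInf {v : EReal | ∃ x, A x = b ∧ x ∈ K ∧ v = (⟪c, x⟫ : EReal)}

/-- Feasibility for the normalized problem `FP_{S∞}(ker A(θ), int K̄)`: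
`(x,τ,ρ) ∈ ker A(θ) ∩ int K̄` with `‖(x,τ,ρ)‖_∞ ≤ 1`, where `ninf` is the
sup-eigenvalue norm on `E` and the product norm is the max over components. -/
def FeasSInf {E : Type*} [NormedAddCommGroup E] [InnerProductSpace ℝ E]
    {m : ℕ} (K : Set E) (ninf : E → ℝ) (A : E →ₗ[ℝ] EuclideanSpace ℝ (Fin m))
    (b : EuclideanSpace ℝ (Fin m)) (c : E) (θ : ℝ) (x : E) (τ ρ : ℝ) : Prop :=
  A x = τ • b ∧ ⟪c, x⟫ - τ * θ + ρ = 0 ∧ x ∈ interior K ∧ 0 < τ ∧ 0 < ρ ∧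
    max (ninf x) (max |τ| |ρ|) ≤ 1

/-!
If `(x, τ, ρ)` is feasible for `θ`, then `x / τ` is feasible for (P), so `θ̄ ≤ θ_p + 1` gives
`τ θ̄ ≤ ⟨c, x⟩ + τ`. Raising `θ` to `θ̄` while keeping `⟨c, x⟩ - τθ + ρ = 0` forces the new last
coordinate to be `τ θ̄ - ⟨c, x⟩ ≤ τ ≤ 1`, and it only grows, so upper cuts on it transfer back.
-/

section

variable {E : Type*} [NormedAddCommGroup E] [InnerProductSpace ℝ E] {m : ℕ} {K : Set E}
  {A : E →ₗ[ℝ] EuclideanSpace ℝ (Fin m)} {b : EuclideanSpace ℝ (Fin m)} {c x : E} {τ : ℝ}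

lemma thetaP_le_inner_div (hKcone : ∀ z ∈ K, ∀ t : ℝ, 0 ≤ t → t • z ∈ K) (hτ : 0 < τ)
    (hx : x ∈ K) (hA : A x = τ • b) : thetaP K A b c ≤ ((⟪c, x⟫ / τ : ℝ) : EReal) := by
  refine sInf_le ⟨τ⁻¹ • x, ?_, hKcone x hx τ⁻¹ (inv_nonneg.mpr hτ.le), ?_⟩
  · rw [map_smul, hA, inv_smul_smul₀ hτ.ne']
  · rw [real_inner_smul_right, inv_mul_eq_div]

lemma mul_le_inner_add_of_le_thetaP_add_one (hKcone : ∀ z ∈ K, ∀ t : ℝ, 0 ≤ t → t • z ∈ K)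
    (hτ : 0 < τ) (hx : x ∈ K) (hA : A x = τ • b) {θbar : ℝ}
    (hθbar : (θbar : EReal) ≤ thetaP K A b c + 1) : τ * θbar ≤ ⟪c, x⟫ + τ := by
  have hle : (θbar : EReal) ≤ ((⟪c, x⟫ / τ + 1 : ℝ) : EReal) :=
    hθbar.trans (by simpa using add_le_add_left (thetaP_le_inner_div hKcone hτ hx hA) 1)
  have h : θbar ≤ ⟪c, x⟫ / τ + 1 := EReal.coe_le_coe_iff.mp hle
  calc τ * θbar ≤ τ * (⟪c, x⟫ / τ + 1) := mul_le_mul_of_nonneg_left h hτ.le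
    _ = ⟪c, x⟫ + τ := by field_simp

namespace FeasSInf

variable {ninf : E → ℝ} {θ ρ : ℝ}

lemma abs_le_one (h : FeasSInf K ninf A b c θ x τ ρ) : |τ| ≤ 1 :=
  (le_max_left _ _).trans ((le_max_right _ _).trans h.2.2.2.2.2)

lemma shift {θbar : ℝ} (h : FeasSInf K ninf A b c θ x τ ρ) (hθ : θ < θbar)
    (hgap : τ * θbar ≤ ⟪c, x⟫ + τ) :
    FeasSInf K ninf A b c θbar x τ (τ * (θbar - θ) + ρ) := by
  have hτ1 : |τ| ≤ 1 := h.abs_le_one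
  obtain ⟨hA, heq, hx, hτ, hρ, hn⟩ := h
  have hρ' : 0 < τ * (θbar - θ) + ρ := by nlinarith
  have hρ'1 : τ * (θbar - θ) + ρ ≤ 1 := by linarith [le_abs_self τ]
  refine ⟨hA, by linarith, hx, hτ, hρ', ?_⟩
  rw [abs_of_pos hρ']
  exact max_le ((le_max_left _ _).trans hn) (max_le hτ1 hρ'1)

end FeasSInf

end

theorem stmt8_general {E : Type*} [NormedAddCommGroup E] [InnerProductSpace ℝ E]
    {m : ℕ} (K : Set E)
    (hKcone : ∀ z ∈ K, ∀ t : ℝ, 0 ≤ t → t • z ∈ K)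
    (ninf : E → ℝ)
    (A : E →ₗ[ℝ] EuclideanSpace ℝ (Fin m)) (b : EuclideanSpace ℝ (Fin m)) (c : E)
    (θbar : ℝ)
    (hθ2 : (θbar : EReal) ≤ thetaP K A b c + 1) :
    (∀ θ : ℝ, thetaP K A b c < (θ : EReal) → θ < θbar →
      ∀ (x : E) (τ ρ : ℝ), FeasSInf K ninf A b c θ x τ ρ →
        FeasSInf K ninf A b c θbar x τ (τ * (θbar - θ) + ρ)) ∧
    (∀ v ∈ K, ∀ ξx ξτ ξρ : ℝ, ξx < 1 → ξτ < 1 → ξρ < 1 →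
      (∀ (x : E) (τ ρ : ℝ), FeasSInf K ninf A b c θbar x τ ρ →
        ⟪v, x⟫ ≤ ξx ∧ τ ≤ ξτ ∧ ρ ≤ ξρ) →
      ∀ θ : ℝ, thetaP K A b c < (θ : EReal) → θ < θbar →
        ∀ (x : E) (τ ρ : ℝ), FeasSInf K ninf A b c θ x τ ρ →
          ⟪v, x⟫ ≤ ξx ∧ τ ≤ ξτ ∧ ρ ≤ ξρ) := by
  have hshift : ∀ θ : ℝ, thetaP K A b c < (θ : EReal) → θ < θbar →
      ∀ (x : E) (τ ρ : ℝ), FeasSInf K ninf A b c θ x τ ρ →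
        FeasSInf K ninf A b c θbar x τ (τ * (θbar - θ) + ρ) :=
    fun θ _ hθ x τ ρ h => h.shift hθ <|
      mul_le_inner_add_of_le_thetaP_add_one hKcone h.2.2.2.1 (interior_subset h.2.2.1) h.1 hθ2
  refine ⟨hshift, fun v _ ξx ξτ ξρ _ _ _ hcut θ hθp hθ x τ ρ h => ?_⟩
  obtain ⟨hvx, hτ, hρ⟩ := hcut x τ _ (hshift θ hθp hθ x τ ρ h)
  have hgrow : 0 < τ * (θbar - θ) := mul_pos h.2.2.2.1 (sub_pos.mpr hθ)
  exact ⟨hvx, hτ, by linarith⟩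

/-- Suppose (P) is strongly feasible and `θ_p < θ̄ ≤ θ_p + 1`.  Then for
every `θ` with `θ_p < θ < θ̄`, every feasible `(x,τ,ρ)` of the `θ`-problem yields the
feasible point `(x, τ, τ(θ̄−θ)+ρ)` of the `θ̄`-problem; consequently cuts
`⟨v,x̄⟩ ≤ ξ_x`, `τ̄ ≤ ξ_τ`, `ρ̄ ≤ ξ_ρ` valid for the `θ̄`-problem remain valid for the
`θ`-problem. -/
theorem stmt8 {E : Type*} [NormedAddCommGroup E] [InnerProductSpace ℝ E]
    [FiniteDimensional ℝ E] {m : ℕ} (K : Set E)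
    (hKclosed : IsClosed K) (hKconv : Convex ℝ K)
    (hKcone : ∀ z ∈ K, ∀ t : ℝ, 0 ≤ t → t • z ∈ K)
    (hKint : (interior K).Nonempty)
    (hKselfdual : {s : E | ∀ z ∈ K, 0 ≤ ⟪s, z⟫} = K)
    (ninf : E → ℝ)
    (A : E →ₗ[ℝ] EuclideanSpace ℝ (Fin m)) (b : EuclideanSpace ℝ (Fin m)) (c : E)
    (θbar : ℝ)
    (hPsf : ∃ x ∈ interior K, A x = b)
    (hθ1 : thetaP K A b c < (θbar : EReal))
    (hθ2 : (θbar : EReal) ≤ thetaP K A b c + 1) :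
    (∀ θ : ℝ, thetaP K A b c < (θ : EReal) → θ < θbar →
      ∀ (x : E) (τ ρ : ℝ), FeasSInf K ninf A b c θ x τ ρ →
        FeasSInf K ninf A b c θbar x τ (τ * (θbar - θ) + ρ)) ∧
    (∀ v ∈ K, ∀ ξx ξτ ξρ : ℝ, ξx < 1 → ξτ < 1 → ξρ < 1 →
      (∀ (x : E) (τ ρ : ℝ), FeasSInf K ninf A b c θbar x τ ρ →
        ⟪v, x⟫ ≤ ξx ∧ τ ≤ ξτ ∧ ρ ≤ ξρ) →
      ∀ θ : ℝ, thetaP K A b c < (θ : EReal) → θ < θbar →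
        ∀ (x : E) (τ ρ : ℝ), FeasSInf K ninf A b c θ x τ ρ →
          ⟪v, x⟫ ≤ ξx ∧ τ ≤ ξτ ∧ ρ ≤ ξρ) :=
  stmt8_general K hKcone ninf A b c θbar hθ2
end

section
/- Suppose (P) is strongly feasible, θ ∈ ℝ, and x is a strictly feasible solution of (P) with max{θ_p, θ−1} < ⟨c,x⟩ < θ. Set v = (x^{−1/2}, 1, 1) ∈ int K̄. Then δ_∞(Q_v(ker A(θ)) ∩ int K̄) ≥ θ − ⟨c,x⟩, where δ_∞(L ∩ int K̄) = max{det(w) : w ∈ L ∩ int K̄, ‖w‖_∞ = 1} and Q_v is the quadratic representation. -/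
open scoped RealInnerProductSpace

/-- The set of values `det(w)` over `w ∈ Q_v(ker A(θ)) ∩ int K̄` with `‖w‖_∞ = 1`, whose
supremum is `δ_∞(Q_v(ker A(θ)) ∩ int K̄)`.  Here `Qv : E → E` is the `E`-component of the
quadratic representation `Q_v` with `v = (x^{-1/2}, 1, 1)` (which acts as the identity on
the two scalar components), `detE` and `ninfE` are the Jordan-algebraic determinant and
maximum absolute eigenvalue on `E`, and det/`‖·‖_∞` on the product `E × ℝ × ℝ` are the
product of components resp. the max over components. -/
noncomputable def deltaSet {E : Type*} [NormedAddCommGroup E] [InnerProductSpace ℝ E]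
    {m : ℕ} (K : Set E) (A : E →ₗ[ℝ] EuclideanSpace ℝ (Fin m))
    (b : EuclideanSpace ℝ (Fin m)) (c : E) (θ : ℝ)
    (detE ninfE : E → ℝ) (Qv : E → E) : Set ℝ :=
  {d : ℝ | ∃ u : E × ℝ × ℝ,
    A u.1 = u.2.1 • b ∧ ⟪c, u.1⟫ - u.2.1 * θ + u.2.2 = 0 ∧
    Qv u.1 ∈ interior K ∧ 0 < u.2.1 ∧ 0 < u.2.2 ∧
    max (ninfE (Qv u.1)) (max |u.2.1| |u.2.2|) = 1 ∧
    d = detE (Qv u.1) * u.2.1 * u.2.2}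

/-- Suppose (P) is strongly feasible and `x` is a strictly feasible
solution of (P) with `max {θ_p, θ−1} < ⟨c,x⟩ < θ`.  With `v = (x^{-1/2}, 1, 1)` (so that
`Q_{x^{-1/2}} x = e`), one has `δ_∞(Q_v(ker A(θ)) ∩ int K̄) ≥ θ − ⟨c,x⟩`. -/
theorem stmt9 {E : Type*} [NormedAddCommGroup E] [InnerProductSpace ℝ E]
    [FiniteDimensional ℝ E] {m : ℕ} (K : Set E) (e : E)
    (hKclosed : IsClosed K) (hKconv : Convex ℝ K)
    (hKcone : ∀ z ∈ K, ∀ t : ℝ, 0 ≤ t → t • z ∈ K)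
    (hKselfdual : {s : E | ∀ z ∈ K, 0 ≤ ⟪s, z⟫} = K)
    (he : e ∈ interior K)
    (A : E →ₗ[ℝ] EuclideanSpace ℝ (Fin m)) (b : EuclideanSpace ℝ (Fin m)) (c : E)
    (θ : ℝ) (detE ninfE : E → ℝ) (Qv : E → E) (x : E)
    (hdet_e : detE e = 1) (hninf_e : ninfE e = 1)
    (hPsf : ∃ x' ∈ interior K, A x' = b)
    (hx_int : x ∈ interior K) (hx_feas : A x = b)
    (hθp : sInf {v : EReal | ∃ z, A z = b ∧ z ∈ K ∧ v = (⟪c, z⟫ : EReal)} <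
      ((⟪c, x⟫ : ℝ) : EReal))
    (h1 : θ - 1 < ⟪c, x⟫) (h2 : ⟪c, x⟫ < θ)
    (hQ : Qv x = e)
    (hbdd : BddAbove (deltaSet K A b c θ detE ninfE Qv)) :
    θ - ⟪c, x⟫ ≤ sSup (deltaSet K A b c θ detE ninfE Qv) := by
  apply le_csSup hbdd
  refine ⟨(x, 1, θ - ⟪c, x⟫), ?_, by dsimp only; ring, ?_, one_pos,
    by dsimp only; linarith, ?_, ?_⟩
  · simpa using hx_feas
  · rw [hQ]; exact he
  · show max (ninfE (Qv x)) (max |(1:ℝ)| |θ - ⟪c, x⟫|) = 1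
    rw [hQ, hninf_e, abs_one, abs_of_pos (by linarith : (0:ℝ) < θ - ⟪c, x⟫),
      max_eq_left (by linarith : θ - ⟪c, x⟫ ≤ 1), max_self]
  · show θ - ⟪c, x⟫ = detE (Qv x) * 1 * (θ - ⟪c, x⟫)
    rw [hQ, hdet_e]; ring
end

section
/- Define A(θ)(x,τ,ρ) = (Ax − τb, ⟨c,x⟩ − τθ + ρ) and K̄ = K × ℝ₊ × ℝ₊. The set range A(θ)* ∩ int K̄ is nonempty if and only if (D) is strongly feasible (there exists y with c − A*y ∈ int K) and θ_d > θ, where θ_d = sup{b^⊤y : c − A*y ∈ K}. -/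
open scoped RealInnerProductSpace
open Pointwise

/-- `range A(θ)* ∩ int K̄` is nonempty iff (D) is strongly feasible and
`θ_d > θ`, where `θ_d = sup {b^⊤y : c − A*y ∈ K}` (in `EReal`, so `−∞` if (D) is
infeasible) and `A(θ)*(y,γ) = (A*y + γc, −b^⊤y − γθ, γ)`. -/
theorem stmt11 {E : Type*} [NormedAddCommGroup E] [InnerProductSpace ℝ E]
    [FiniteDimensional ℝ E] {m : ℕ} (K : Set E)
    (hKclosed : IsClosed K) (hKconv : Convex ℝ K)
    (hKcone : ∀ z ∈ K, ∀ t : ℝ, 0 ≤ t → t • z ∈ K)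
    (hKint : (interior K).Nonempty)
    (hKselfdual : {s : E | ∀ z ∈ K, 0 ≤ ⟪s, z⟫} = K)
    (A : E →ₗ[ℝ] EuclideanSpace ℝ (Fin m)) (b : EuclideanSpace ℝ (Fin m)) (c : E)
    (θ : ℝ) :
    (∃ (y : EuclideanSpace ℝ (Fin m)) (γ : ℝ),
        (LinearMap.adjoint A) y + γ • c ∈ interior K ∧ 0 < -⟪b, y⟫ - γ * θ ∧ 0 < γ) ↔
      (∃ y, c - (LinearMap.adjoint A) y ∈ interior K) ∧
        (θ : EReal) <
          sSup {v : EReal | ∃ y, c - (LinearMap.adjoint A) y ∈ K ∧ v = (⟪b, y⟫ : EReal)} := by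
  constructor
  · rintro ⟨y, γ, hint, hpos, hγ⟩
    have hγne : γ⁻¹ ≠ 0 := inv_ne_zero (ne_of_gt hγ)
    have hsmul : γ⁻¹ • ((LinearMap.adjoint A) y + γ • c) ∈ interior K := by
      have h1 : γ⁻¹ • interior K ⊆ interior K := by
        rw [← interior_smul₀ hγne]
        apply interior_mono
        rintro _ ⟨z, hz, rfl⟩
        exact hKcone z hz γ⁻¹ (le_of_lt (inv_pos.mpr hγ))
      exact h1 ⟨_, hint, rfl⟩
    have heq : c - (LinearMap.adjoint A) (-(γ⁻¹ • y)) =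
        γ⁻¹ • ((LinearMap.adjoint A) y + γ • c) := by
      have : γ⁻¹ • (γ • c) = c := by
        rw [smul_smul, inv_mul_cancel₀ (ne_of_gt hγ), one_smul]
      rw [smul_add, this, map_neg, map_smul, sub_eq_add_neg, add_comm, neg_neg]
    have hmemint : c - (LinearMap.adjoint A) (-(γ⁻¹ • y)) ∈ interior K := heq ▸ hsmul
    refine ⟨⟨-(γ⁻¹ • y), hmemint⟩, ?_⟩
    have hval : θ < ⟪b, -(γ⁻¹ • y)⟫ := by
      rw [inner_neg_right, real_inner_smul_right]
      have h2 : γ⁻¹ * (γ * θ) < γ⁻¹ * (-⟪b, y⟫) :=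
        mul_lt_mul_of_pos_left (by linarith) (inv_pos.mpr hγ)
      rw [← mul_assoc, inv_mul_cancel₀ (ne_of_gt hγ), one_mul] at h2
      linarith
    refine lt_of_lt_of_le (EReal.coe_lt_coe_iff.mpr hval) (le_sSup ?_)
    exact ⟨-(γ⁻¹ • y), interior_subset hmemint, rfl⟩
  · rintro ⟨⟨y₀, hy₀⟩, hsup⟩
    obtain ⟨v, ⟨y₁, hy₁, rfl⟩, hv⟩ := lt_sSup_iff.mp hsup
    have hv' : θ < ⟪b, y₁⟫ := EReal.coe_lt_coe_iff.mp hv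
    set δ : ℝ := ⟪b, y₁⟫ - θ with hδ
    have hδpos : 0 < δ := sub_pos.mpr hv'
    set d : ℝ := ⟪b, y₁⟫ - ⟪b, y₀⟫ with hd
    set t : ℝ := min (1/2) (δ / (2 * (1 + |d|))) with ht
    have hden : 0 < 2 * (1 + |d|) := by positivity
    have htpos : 0 < t := lt_min (by norm_num) (by positivity)
    have ht1 : t < 1 := lt_of_le_of_lt (min_le_left _ _) (by norm_num)
    have htd : t * d < δ := by
      calc t * d ≤ t * |d| := mul_le_mul_of_nonneg_left (le_abs_self d) (le_of_lt htpos)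
        _ ≤ (δ / (2 * (1 + |d|))) * |d| := by
          apply mul_le_mul_of_nonneg_right (min_le_right _ _) (abs_nonneg d)
        _ < δ := by
          rw [div_mul_eq_mul_div, div_lt_iff₀ hden]
          nlinarith [abs_nonneg d]
    refine ⟨-((1 - t) • y₁ + t • y₀), 1, ?_, ?_, one_pos⟩
    · have heq : (LinearMap.adjoint A) (-((1 - t) • y₁ + t • y₀)) + (1 : ℝ) • c =
          (1 - t) • (c - (LinearMap.adjoint A) y₁) + t • (c - (LinearMap.adjoint A) y₀) := by
        rw [map_neg, map_add, map_smul, map_smul, smul_sub, smul_sub, one_smul]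
        module
      rw [heq]
      exact hKconv.combo_self_interior_mem_interior hy₁ hy₀ (by linarith) htpos (by ring)
    · have h3 : ⟪b, -((1 - t) • y₁ + t • y₀)⟫ = -((1 - t) * ⟪b, y₁⟫ + t * ⟪b, y₀⟫) := by
        rw [inner_neg_right, inner_add_right, real_inner_smul_right, real_inner_smul_right]
      rw [h3]
      rw [hδ, hd] at htd
      nlinarith [htd]
end

section
/- Let (x,τ,ρ) be a nonzero element of ker A(θ) ∩ K̄. Then exactly one of the following holds: (1) τ > 0, and (1/τ)x is a feasible solution of (P) with ⟨c,(1/τ)x⟩ ≤ θ; (2) τ = 0 and ρ > 0, and x is an improving ray of (P): x ∈ K, Ax = 0, ⟨c,x⟩ < 0; (3) τ = ρ = 0, and x is a reducing direction for (D): x ∈ K \ {0}, Ax = 0, ⟨c,x⟩ = 0. -/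
open scoped RealInnerProductSpace

/-- Let `(x,τ,ρ)` be a nonzero element of `ker A(θ) ∩ K̄`.  Then exactly
one of the following holds: (1) `τ > 0` and `(1/τ)x` is feasible for (P) with value `≤ θ`;
(2) `τ = 0`, `ρ > 0`, and `x` is an improving ray of (P); (3) `τ = ρ = 0` and `x` is a
reducing direction for (D). -/
theorem stmt12 {E : Type*} [NormedAddCommGroup E] [InnerProductSpace ℝ E]
    [FiniteDimensional ℝ E] {m : ℕ} (K : Set E)
    (hKclosed : IsClosed K) (hKconv : Convex ℝ K)
    (hKcone : ∀ z ∈ K, ∀ t : ℝ, 0 ≤ t → t • z ∈ K)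
    (hKint : (interior K).Nonempty)
    (hKselfdual : {s : E | ∀ z ∈ K, 0 ≤ ⟪s, z⟫} = K)
    (A : E →ₗ[ℝ] EuclideanSpace ℝ (Fin m)) (b : EuclideanSpace ℝ (Fin m)) (c : E)
    (θ : ℝ) (x : E) (τ ρ : ℝ)
    (hker1 : A x = τ • b) (hker2 : ⟪c, x⟫ - τ * θ + ρ = 0)
    (hxK : x ∈ K) (hτ : 0 ≤ τ) (hρ : 0 ≤ ρ)
    (hne : ¬(x = 0 ∧ τ = 0 ∧ ρ = 0)) :
    (0 < τ ∧ A (τ⁻¹ • x) = b ∧ τ⁻¹ • x ∈ K ∧ ⟪c, τ⁻¹ • x⟫ ≤ θ) ∨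
    (τ = 0 ∧ 0 < ρ ∧ x ∈ K ∧ A x = 0 ∧ ⟪c, x⟫ < 0) ∨
    (τ = 0 ∧ ρ = 0 ∧ x ∈ K ∧ x ≠ 0 ∧ A x = 0 ∧ ⟪c, x⟫ = 0) := by
  rcases lt_or_eq_of_le hτ with hτ0 | hτ0
  · left
    refine ⟨hτ0, ?_, ?_, ?_⟩
    · rw [map_smul, hker1, smul_smul, inv_mul_cancel₀ hτ0.ne', one_smul]
    · exact hKcone x hxK _ (inv_nonneg.2 hτ)
    · rw [real_inner_smul_right]
      have hcx : ⟪c, x⟫ = τ * θ - ρ := by linarith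
      rw [hcx]
      rw [mul_sub, inv_mul_cancel_left₀ hτ0.ne']
      have : 0 ≤ τ⁻¹ * ρ := by positivity
      linarith
  · have hτz : τ = 0 := hτ0.symm
    have hAx : A x = 0 := by rw [hker1, hτz, zero_smul]
    have hcx : ⟪c, x⟫ = -ρ := by rw [hτz] at hker2; linarith
    rcases lt_or_eq_of_le hρ with hρ0 | hρ0
    · right; left
      exact ⟨hτz, hρ0, hxK, hAx, by rw [hcx]; linarith⟩
    · right; right
      have hρz : ρ = 0 := hρ0.symm
      have hx0 : x ≠ 0 := fun h => hne ⟨h, hτz, hρz⟩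
      exact ⟨hτz, hρz, hxK, hx0, hAx, by rw [hcx, hρz, neg_zero]⟩
end

section
/- Suppose (D) is strongly feasible, (P) is feasible, and θ = θ_d (the common optimal value). Then ker A(θ) ∩ (K̄ \ {0}) ≠ ∅, and for any nonzero (x,τ,ρ) in this set, τ > 0 and (1/τ)x is an optimal solution of (P). -/
/-! Strict dual feasibility puts `s₀ = c - A* y₀` in the interior of the self-dual cone `K`, so
`⟪c, x⟫ - ⟪y₀, A x⟫ = ⟪x, s₀⟫ ≥ ε ‖x‖` on `K`. This coercivity makes the cone
`{(A x, t) | x ∈ K, ⟪c, x⟫ ≤ t}` closed. If `(b, θ)` were not in it, a separating functional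
`(z, t) ↦ ⟪d, z⟫ + μ t` would yield dual feasible points with `b^⊤ y` unbounded above; hence
some feasible `x₀` has `⟪c, x₀⟫ ≤ θ` and `(x₀, 1, θ - ⟪c, x₀⟫)` lies in `ker A(θ) ∩ K̄`. The same
coercivity excludes nonzero kernel elements with `τ = 0`, and for `τ > 0` the point `τ⁻¹ • x`
is feasible with value `θ - ρ / τ ≤ θ`, which weak duality makes optimal. -/

open scoped RealInnerProductSpace

open Filter Topology LinearMap ProperCone

section ConicDuality

variable {E F : Type*} [NormedAddCommGroup E] [InnerProductSpace ℝ E]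
  [NormedAddCommGroup F] [InnerProductSpace ℝ F]

theorem exists_pos_mul_norm_le_inner_of_mem_interior_innerDual [CompleteSpace E] {K : Set E}
    {s : E} (hs : s ∈ interior (innerDual K : Set E)) :
    ∃ ε > 0, ∀ x ∈ K, ε * ‖x‖ ≤ ⟪x, s⟫ := by
  obtain ⟨ε, hε, hball⟩ := Metric.isOpen_iff.mp isOpen_interior s hs
  refine ⟨ε / 2, half_pos hε, fun x hx => ?_⟩
  rcases eq_or_ne x 0 with rfl | hx0
  · simp
  have hxn : 0 < ‖x‖ := norm_pos_iff.mpr hx0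
  have hmem : s - (ε / 2 / ‖x‖) • x ∈ innerDual K := by
    refine interior_subset (hball ?_)
    rw [Metric.mem_ball, dist_eq_norm, sub_sub_cancel_left, norm_neg, norm_smul,
      Real.norm_of_nonneg (by positivity), div_mul_cancel₀ _ hxn.ne']
    exact half_lt_self hε
  have := mem_innerDual.mp hmem hx
  rw [inner_sub_right, real_inner_smul_right, real_inner_self_eq_norm_mul_norm] at this
  have h : ε / 2 / ‖x‖ * (‖x‖ * ‖x‖) = ε / 2 * ‖x‖ := by field_simp
  linarith

def valueCone (C : ProperCone ℝ E) (A : E →ₗ[ℝ] F) (c : E) : PointedCone ℝ (F × ℝ) where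
  carrier := {p | ∃ x ∈ C, A x = p.1 ∧ ⟪c, x⟫ ≤ p.2}
  zero_mem' := ⟨0, C.zero_mem, map_zero A, by simp⟩
  add_mem' := by
    rintro p q ⟨x, hx, hAx, hcx⟩ ⟨x', hx', hAx', hcx'⟩
    refine ⟨x + x', C.add_mem hx hx', by simp [hAx, hAx'], ?_⟩
    rw [inner_add_right, Prod.snd_add]
    exact add_le_add hcx hcx'
  smul_mem' := by
    rintro ⟨t, ht⟩ p ⟨x, hx, hAx, hcx⟩
    refine ⟨t • x, C.smul_mem hx ht, by simp [hAx], ?_⟩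
    simp only [real_inner_smul_right, Prod.smul_snd, Nonneg.mk_smul, smul_eq_mul]
    exact mul_le_mul_of_nonneg_left hcx ht

theorem isClosed_valueCone [FiniteDimensional ℝ E] {C : ProperCone ℝ E} {A : E →ₗ[ℝ] F} {c : E}
    {y : F} {ε : ℝ} (hε : 0 < ε) (hcoer : ∀ x ∈ C, ε * ‖x‖ ≤ ⟪c, x⟫ - ⟪y, A x⟫) :
    IsClosed (valueCone C A c : Set (F × ℝ)) := by
  refine IsSeqClosed.isClosed fun {p q} hp hpq => ?_
  choose x hxC hAx hcx using hp
  have hp₁ : Tendsto (fun n => (p n).1) atTop (𝓝 q.1) := (continuous_fst.tendsto q).comp hpq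
  have hp₂ : Tendsto (fun n => (p n).2) atTop (𝓝 q.2) := (continuous_snd.tendsto q).comp hpq
  obtain ⟨R, hR⟩ := (hp₂.sub ((tendsto_const_nhds (x := y)).inner hp₁)).bddAbove_range
  have hx_ball (n : ℕ) : x n ∈ Metric.closedBall 0 (R / ε) := by
    have := hcoer _ (hxC n)
    have := hR ⟨n, rfl⟩
    rw [mem_closedBall_zero_iff, le_div_iff₀ hε]
    simp only [← hAx] at this
    linarith [hcx n]
  obtain ⟨a, -, φ, hφ, hxa⟩ := (isCompact_closedBall _ _).tendsto_subseq hx_ball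
  refine ⟨a, C.isClosed.mem_of_tendsto hxa (.of_forall fun k => hxC (φ k)), ?_, ?_⟩
  · refine tendsto_nhds_unique ((A.continuous_of_finiteDimensional.tendsto a).comp hxa) ?_
    simpa [Function.comp_def, hAx] using hp₁.comp hφ.tendsto_atTop
  · exact le_of_tendsto_of_tendsto' (tendsto_const_nhds.inner hxa) (hp₂.comp hφ.tendsto_atTop)
      fun k => hcx (φ k)

theorem StrongDual.exists_apply_eq_inner_add_mul [CompleteSpace F] (f : StrongDual ℝ (F × ℝ)) :
    ∃ d : F, ∀ z t, f (z, t) = ⟪d, z⟫ + t * f (0, 1) := by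
  refine ⟨(InnerProductSpace.toDual ℝ F).symm (f.comp (.inl ℝ F ℝ)), fun z t => ?_⟩
  rw [InnerProductSpace.toDual_symm_apply, ContinuousLinearMap.comp_apply,
    ContinuousLinearMap.inl_apply, ← smul_eq_mul, ← map_smul, ← map_add]
  simp

section Duality

variable [FiniteDimensional ℝ E] [FiniteDimensional ℝ F] {C : ProperCone ℝ E}
  {A : E →ₗ[ℝ] F} {b : F} {c : E} {θ : ℝ}

theorem inner_le_inner_of_sub_adjoint_mem_innerDual {K : Set E} {x : E} {y : F}
    (hy : c - adjoint A y ∈ innerDual K) (hx : x ∈ K) (hAx : A x = b) :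
    ⟪b, y⟫ ≤ ⟪c, x⟫ := by
  have := mem_innerDual.mp hy hx
  rw [inner_sub_right, adjoint_inner_right, hAx, real_inner_comm c] at this
  linarith

theorem inner_add_mul_nonneg_of_forall_inner_le
    (hθ : ∀ y, c - adjoint A y ∈ C → ⟪b, y⟫ ≤ θ) {y₀ : F} (hy₀ : c - adjoint A y₀ ∈ C)
    {d : F} {μ : ℝ} (hμ : 0 ≤ μ) (hd : adjoint A d + μ • c ∈ C) :
    0 ≤ ⟪d, b⟫ + μ * θ := by
  by_contra! hneg
  -- the points `(1 + t μ)⁻¹ • (y₀ - t • d)`, `t ≥ 0`, are dual feasible with values unbounded above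
  have hpos (t : ℝ) (ht : 0 ≤ t) : 0 < 1 + t * μ := by positivity
  have hfeas (t : ℝ) (ht : 0 ≤ t) : c - adjoint A ((1 + t * μ)⁻¹ • (y₀ - t • d)) ∈ C := by
    have : c - adjoint A ((1 + t * μ)⁻¹ • (y₀ - t • d)) =
        (1 + t * μ)⁻¹ • ((c - adjoint A y₀) + t • (adjoint A d + μ • c)) := by
      rw [map_smul, map_sub, map_smul]
      match_scalars <;> field_simp
    rw [this]
    exact C.smul_mem (C.add_mem hy₀ (C.smul_mem hd ht)) (inv_nonneg.mpr (hpos t ht).le)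
  have hval (t : ℝ) (ht : 0 ≤ t) : ⟪b, y₀⟫ - θ ≤ t * (⟪d, b⟫ + μ * θ) := by
    have := hθ _ (hfeas t ht)
    rw [real_inner_smul_right, inner_sub_right, real_inner_smul_right, real_inner_comm d,
      inv_mul_le_iff₀ (hpos t ht)] at this
    linarith
  have hle := hθ y₀ hy₀
  have := hval ((θ + 1 - ⟪b, y₀⟫) / -(⟪d, b⟫ + μ * θ)) (div_nonneg (by linarith) (by linarith))
  rw [div_mul_eq_mul_div, mul_div_assoc, div_neg, div_self hneg.ne] at this
  linarith

theorem exists_mem_map_eq_inner_le_of_forall_inner_le (hC : innerDual (C : Set E) = C)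
    {y₀ : F} (hy₀ : c - adjoint A y₀ ∈ interior (C : Set E))
    (hθ : ∀ y, c - adjoint A y ∈ C → ⟪b, y⟫ ≤ θ) :
    ∃ x ∈ C, A x = b ∧ ⟪c, x⟫ ≤ θ := by
  obtain ⟨ε, hε, hcoer⟩ := exists_pos_mul_norm_le_inner_of_mem_interior_innerDual
    (K := (C : Set E)) (by rwa [hC])
  have hS : IsClosed (valueCone C A c : Set (F × ℝ)) := isClosed_valueCone hε (y := y₀)
    fun x hx => by simpa [inner_sub_right, adjoint_inner_right, real_inner_comm] using hcoer x hx
  by_contra! hgt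
  obtain ⟨f, hf, hfbθ⟩ := ProperCone.hyperplane_separation_point ⟨valueCone C A c, hS⟩
    (x₀ := (b, θ)) fun ⟨x, hx, hAx, hcx⟩ => (hgt x hx hAx).not_ge hcx
  obtain ⟨d, hd⟩ := StrongDual.exists_apply_eq_inner_add_mul f
  have hμ : 0 ≤ f (0, 1) := hf _ ⟨0, C.zero_mem, map_zero A, by simp⟩
  have hdual : adjoint A d + f (0, 1) • c ∈ C := by
    rw [← hC, mem_innerDual]
    intro x hx
    have := hf (A x, ⟪c, x⟫) ⟨x, hx, rfl, le_rfl⟩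
    rw [hd] at this
    rw [inner_add_right, adjoint_inner_right, real_inner_smul_right, real_inner_comm c,
      real_inner_comm d]
    linarith
  have := inner_add_mul_nonneg_of_forall_inner_le hθ (interior_subset hy₀) hμ hdual
  rw [hd] at hfbθ
  linarith

theorem eq_zero_of_map_eq_zero_of_inner_nonpos (hC : innerDual (C : Set E) = C) {y₀ : F}
    (hy₀ : c - adjoint A y₀ ∈ interior (C : Set E)) {x : E} (hx : x ∈ C) (hAx : A x = 0)
    (hcx : ⟪c, x⟫ ≤ 0) : x = 0 := by
  obtain ⟨ε, hε, hcoer⟩ := exists_pos_mul_norm_le_inner_of_mem_interior_innerDual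
    (K := (C : Set E)) (by rwa [hC])
  have := hcoer x hx
  rw [inner_sub_right, adjoint_inner_right, hAx, inner_zero_left, sub_zero, real_inner_comm] at this
  exact norm_le_zero_iff.mp (nonpos_of_mul_nonpos_right (this.trans hcx) hε)

end Duality

end ConicDuality

theorem stmt13_general {E : Type*} [NormedAddCommGroup E] [InnerProductSpace ℝ E]
    [FiniteDimensional ℝ E] {m : ℕ} (K : Set E)
    (hKselfdual : {s : E | ∀ z ∈ K, 0 ≤ ⟪s, z⟫} = K)
    (A : E →ₗ[ℝ] EuclideanSpace ℝ (Fin m)) (b : EuclideanSpace ℝ (Fin m)) (c : E)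
    (θ : ℝ)
    (hDsf : ∃ y, c - (LinearMap.adjoint A) y ∈ interior K)
    (hθ : (θ : EReal) =
      sSup {v : EReal | ∃ y, c - (LinearMap.adjoint A) y ∈ K ∧ v = (⟪b, y⟫ : EReal)}) :
    (∃ x : E, ∃ τ ρ : ℝ, A x = τ • b ∧ ⟪c, x⟫ - τ * θ + ρ = 0 ∧
      x ∈ K ∧ 0 ≤ τ ∧ 0 ≤ ρ ∧ ¬(x = 0 ∧ τ = 0 ∧ ρ = 0)) ∧
    (∀ (x : E) (τ ρ : ℝ), A x = τ • b → ⟪c, x⟫ - τ * θ + ρ = 0 →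
      x ∈ K → 0 ≤ τ → 0 ≤ ρ → ¬(x = 0 ∧ τ = 0 ∧ ρ = 0) →
      0 < τ ∧ A (τ⁻¹ • x) = b ∧ τ⁻¹ • x ∈ K ∧
        ∀ x' : E, A x' = b → x' ∈ K → ⟪c, τ⁻¹ • x⟫ ≤ ⟪c, x'⟫) := by
  have hK : (innerDual K : Set E) = K := by
    conv_rhs => rw [← hKselfdual]
    ext s
    simp [real_inner_comm s]
  obtain ⟨C, rfl⟩ : ∃ C : ProperCone ℝ E, (C : Set E) = K := ⟨_, hK⟩
  have hC : innerDual (C : Set E) = C := SetLike.coe_injective hK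
  obtain ⟨y₀, hy₀⟩ := hDsf
  have hdual : ∀ y, c - adjoint A y ∈ C → ⟪b, y⟫ ≤ θ := fun y hy =>
    EReal.coe_le_coe_iff.mp (hθ ▸ le_sSup ⟨y, hy, rfl⟩)
  have hprimal : ∀ x ∈ C, A x = b → θ ≤ ⟪c, x⟫ := fun x hx hAx =>
    EReal.coe_le_coe_iff.mp <| hθ ▸ sSup_le fun _ ⟨y, hy, hv⟩ => hv ▸ EReal.coe_le_coe
      (inner_le_inner_of_sub_adjoint_mem_innerDual (by rwa [hC]) hx hAx)
  obtain ⟨x₀, hx₀, hAx₀, hcx₀⟩ := exists_mem_map_eq_inner_le_of_forall_inner_le hC hy₀ hdual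
  refine ⟨⟨x₀, 1, θ - ⟪c, x₀⟫, by simpa using hAx₀, by ring, hx₀, zero_le_one, by linarith,
    fun h => one_ne_zero h.2.1⟩, fun x τ ρ hAx hval hx hτ hρ hne => ?_⟩
  have hτ : 0 < τ := by
    refine hτ.lt_of_ne fun h0 => hne ?_
    subst h0
    obtain rfl := eq_zero_of_map_eq_zero_of_inner_nonpos hC hy₀ hx (by simpa using hAx)
      (by linarith)
    exact ⟨rfl, rfl, by simpa using hval⟩
  refine ⟨hτ, by rw [map_smul, hAx, inv_smul_smul₀ hτ.ne'], C.smul_mem hx (inv_nonneg.2 hτ.le),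
    fun x' hAx' hx' => ?_⟩
  calc ⟪c, τ⁻¹ • x⟫ = θ - τ⁻¹ * ρ := by
        rw [real_inner_smul_right]; field_simp; linarith
    _ ≤ θ := sub_le_self _ (by positivity)
    _ ≤ ⟪c, x'⟫ := hprimal x' hx' hAx'

/-- Suppose (D) is strongly feasible, (P) is feasible, and `θ` equals
the optimal value `θ_d = sup {b^⊤y : c − A*y ∈ K}`.  Then `ker A(θ) ∩ (K̄ \ {0})` is
nonempty, and every nonzero `(x,τ,ρ)` in `ker A(θ) ∩ K̄` has `τ > 0` and `(1/τ)x` an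
optimal solution of (P). -/
theorem stmt13 {E : Type*} [NormedAddCommGroup E] [InnerProductSpace ℝ E]
    [FiniteDimensional ℝ E] {m : ℕ} (K : Set E)
    (hKclosed : IsClosed K) (hKconv : Convex ℝ K)
    (hKcone : ∀ z ∈ K, ∀ t : ℝ, 0 ≤ t → t • z ∈ K)
    (hKint : (interior K).Nonempty)
    (hKselfdual : {s : E | ∀ z ∈ K, 0 ≤ ⟪s, z⟫} = K)
    (A : E →ₗ[ℝ] EuclideanSpace ℝ (Fin m)) (b : EuclideanSpace ℝ (Fin m)) (c : E)
    (θ : ℝ)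
    (hDsf : ∃ y, c - (LinearMap.adjoint A) y ∈ interior K)
    (hPfeas : ∃ x, A x = b ∧ x ∈ K)
    (hθ : (θ : EReal) =
      sSup {v : EReal | ∃ y, c - (LinearMap.adjoint A) y ∈ K ∧ v = (⟪b, y⟫ : EReal)}) :
    (∃ x : E, ∃ τ ρ : ℝ, A x = τ • b ∧ ⟪c, x⟫ - τ * θ + ρ = 0 ∧
      x ∈ K ∧ 0 ≤ τ ∧ 0 ≤ ρ ∧ ¬(x = 0 ∧ τ = 0 ∧ ρ = 0)) ∧
    (∀ (x : E) (τ ρ : ℝ), A x = τ • b → ⟪c, x⟫ - τ * θ + ρ = 0 →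
      x ∈ K → 0 ≤ τ → 0 ≤ ρ → ¬(x = 0 ∧ τ = 0 ∧ ρ = 0) →
      0 < τ ∧ A (τ⁻¹ • x) = b ∧ τ⁻¹ • x ∈ K ∧
        ∀ x' : E, A x' = b → x' ∈ K → ⟪c, τ⁻¹ • x⟫ ≤ ⟪c, x'⟫) :=
  stmt13_general K hKselfdual A b c θ hDsf hθ
end

section
/- Consider the pair of problems (P^P_K): inf t over (y,z,t,w) ∈ ℝ^m × K × ℝ₊ × ℝ₊ subject to b^⊤y + t − w = 0, ⟨e,z⟩ + w = 1, −A*y − z + te = 0; and its dual (D^P_K): sup x₂ over (x₁,x₂,x₃) subject to Ax₃ − x₁b = 0, 1 − x₁ − ⟨e,x₃⟩ ≥ 0, x₁ − x₂ ≥ 0, x₃ − x₂e ∈ K. Then both (P^P_K) and (D^P_K) are strongly feasible: explicitly, (0, e/(⟨e,e⟩+1), 1/(⟨e,e⟩+1), 1/(⟨e,e⟩+1)) is an interior feasible point of (P^P_K) and (0, −1, 0) is an interior feasible point of (D^P_K). -/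
open scoped RealInnerProductSpace Pointwise

/-- Both `(P^P_K)` and `(D^P_K)` are strongly feasible: explicitly,
`(y,z,t,w) = (0, e/(⟨e,e⟩+1), 1/(⟨e,e⟩+1), 1/(⟨e,e⟩+1))` is an interior feasible point of
`(P^P_K)` (constraints `b^⊤y + t − w = 0`, `⟨e,z⟩ + w = 1`, `−A*y − z + te = 0`,
`z ∈ int K`, `t > 0`, `w > 0`), and `(x₁,x₂,x₃) = (0, −1, 0)` is an interior feasible point
of `(D^P_K)` (constraints `Ax₃ − x₁b = 0`, `1 − x₁ − ⟨e,x₃⟩ > 0`, `x₁ − x₂ > 0`,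
`x₃ − x₂e ∈ int K`). -/
theorem stmt14 {E : Type*} [NormedAddCommGroup E] [InnerProductSpace ℝ E]
    [FiniteDimensional ℝ E] {m : ℕ} (K : Set E) (e : E)
    (hKclosed : IsClosed K) (hKconv : Convex ℝ K)
    (hKcone : ∀ z ∈ K, ∀ t : ℝ, 0 ≤ t → t • z ∈ K)
    (he : e ∈ interior K)
    (A : E →ₗ[ℝ] EuclideanSpace ℝ (Fin m)) (b : EuclideanSpace ℝ (Fin m)) :
    (⟪b, (0 : EuclideanSpace ℝ (Fin m))⟫ + (⟪e, e⟫ + 1)⁻¹ - (⟪e, e⟫ + 1)⁻¹ = 0 ∧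
      ⟪e, (⟪e, e⟫ + 1)⁻¹ • e⟫ + (⟪e, e⟫ + 1)⁻¹ = 1 ∧
      -((LinearMap.adjoint A) 0) - (⟪e, e⟫ + 1)⁻¹ • e + (⟪e, e⟫ + 1)⁻¹ • e = 0 ∧
      (⟪e, e⟫ + 1)⁻¹ • e ∈ interior K ∧
      (0 : ℝ) < (⟪e, e⟫ + 1)⁻¹ ∧ (0 : ℝ) < (⟪e, e⟫ + 1)⁻¹) ∧
    (A (0 : E) - (0 : ℝ) • b = 0 ∧
      (0 : ℝ) < 1 - (0 : ℝ) - ⟪e, (0 : E)⟫ ∧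
      (0 : ℝ) < (0 : ℝ) - (-1 : ℝ) ∧
      (0 : E) - (-1 : ℝ) • e ∈ interior K) := by
  have hpos : (0:ℝ) < ⟪e, e⟫ + 1 := by have := real_inner_self_nonneg (x := e); linarith
  have hc : (0:ℝ) < (⟪e, e⟫ + 1)⁻¹ := inv_pos.mpr hpos
  have hint : (⟪e, e⟫ + 1)⁻¹ • e ∈ interior K := by
    have hsub : ((⟪e, e⟫ + 1)⁻¹ • K : Set E) ⊆ K := by
      rintro _ ⟨x, hx, rfl⟩
      exact hKcone x hx _ hc.le
    have : (⟪e, e⟫ + 1)⁻¹ • e ∈ interior (((⟪e, e⟫ + 1)⁻¹ • K : Set E)) := by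
      rw [interior_smul₀ (ne_of_gt hc)]
      exact Set.smul_mem_smul_set he
    exact interior_mono hsub this
  refine ⟨⟨by simp, ?_, by simp, hint, hc, hc⟩, ⟨by simp, by simp, by norm_num, ?_⟩⟩
  · rw [real_inner_smul_right]
    field_simp
  · simpa using he
end

section
/- For the problem (P^P_K) defined by: inf t over (y,z,t,w) ∈ ℝ^m × K × ℝ₊ × ℝ₊ with b^⊤y + t − w = 0, ⟨e,z⟩ + w = 1, −A*y − z + te = 0: the optimal value is zero if and only if (P) (inf ⟨c,x⟩ s.t. Ax=b, x ∈ K) is not strongly feasible. Moreover, if (y*,z*,t*,w*) is an optimal solution with t* = 0, then (y*, z*) is either an improving ray of (D) (i.e., −A*y* ∈ K and b^⊤y* > 0) or a reducing direction for (P) (i.e., −A*y* ∈ K \ {0} and b^⊤y* = 0). -/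
/-!
If `x ∈ int K` solves `A x = b`, then `x - ε e ∈ K = K*` for some `ε ∈ (0, 1]`, and pairing the
constraint `z = t e - A*y` with `x` gives `t (1 + ⟪x, e⟫) = ⟪x, z⟫ + w ≥ ε ⟪e, z⟫ + w ≥ ε`, so the
optimal value is at least `ε / (1 + ⟪x, e⟫) > 0`. Conversely, if `b ∉ A (int K)`, separating `b`
from the open convex set `A (int K)` gives `y` with `⟪A*y, x⟫ < ⟪b, y⟫` on `int K`; since `K` is a
cone this forces `-A*y ∈ K* = K` and `⟪b, y⟫ ≥ 0`, and `(y, -A*y, 0, ⟪b, y⟫)`, normalised, is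
feasible with `t = 0`.
-/

open scoped RealInnerProductSpace

open Filter Topology

theorem nonpos_of_forall_nonneg_mul_le {a c : ℝ} (h : ∀ t : ℝ, 0 ≤ t → t * a ≤ c) : a ≤ 0 := by
  by_contra! ha
  have h' := h ((|c| + 1) / a) (by positivity)
  rw [div_mul_cancel₀ _ ha.ne'] at h'
  linarith [le_abs_self c]

theorem exists_sub_smul_mem_of_mem_interior {E : Type*} [NormedAddCommGroup E] [NormedSpace ℝ E]
    {K : Set E} {x : E} (hx : x ∈ interior K) (v : E) :
    ∃ ε : ℝ, 0 < ε ∧ ε ≤ 1 ∧ x - ε • v ∈ K := by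
  have hlim : Tendsto (fun ε : ℝ => x - ε • v) (𝓝[>] 0) (𝓝 x) := by
    have hcont : Continuous fun ε : ℝ => x - ε • v := by fun_prop
    simpa using (hcont.tendsto 0).mono_left nhdsWithin_le_nhds
  obtain ⟨ε, hεK, hε⟩ :=
    ((hlim.eventually (mem_interior_iff_mem_nhds.mp hx)).and (Ioc_mem_nhdsGT one_pos)).exists
  exact ⟨ε, hε.1, hε.2, hεK⟩

section Separation

variable {E F : Type*} [NormedAddCommGroup E] [InnerProductSpace ℝ E] [FiniteDimensional ℝ E]
  [NormedAddCommGroup F] [InnerProductSpace ℝ F]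

theorem exists_inner_lt_of_notMem_image (A : E →ₗ[ℝ] F) {U : Set E} (hUo : IsOpen U)
    (hUc : Convex ℝ U) {b : F} (hb : b ∉ A '' U) :
    ∃ y : F, ∀ x ∈ U, ⟪y, A x⟫ < ⟪y, b⟫ := by
  set R := LinearMap.range A
  by_cases hbR : b ∈ R
  · -- `A` is an open map onto its range, so the separation can be done inside `R`.
    let A' : E →ₗ[ℝ] R := A.rangeRestrict
    have hopen : IsOpenMap A' := by
      simpa using (LinearMap.toContinuousLinearMap A').isOpenMap A.surjective_rangeRestrict
    have hbU : (⟨b, hbR⟩ : R) ∉ A' '' U := by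
      rintro ⟨x, hx, hAx⟩
      exact hb ⟨x, hx, congrArg Subtype.val hAx⟩
    obtain ⟨f, hf⟩ := geometric_hahn_banach_open_point (hUc.linear_image A') (hopen U hUo) hbU
    set y := (InnerProductSpace.toDual ℝ R).symm f
    refine ⟨y, fun x hx => ?_⟩
    have hrepr : ∀ r : R, ⟪(y : F), r⟫ = f r := fun r => by
      rw [← Submodule.coe_inner, InnerProductSpace.toDual_symm_apply]
    have hsep := hf _ ⟨x, hx, rfl⟩
    rw [← hrepr, ← hrepr] at hsep
    exact hsep
  · -- The component of `b` orthogonal to `R` separates.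
    set y := b - R.starProjection b
    have hyR : ∀ r ∈ R, ⟪y, r⟫ = 0 := fun r hr => R.starProjection_inner_eq_zero b r hr
    have hy : y ≠ 0 := fun h => hbR (sub_eq_zero.mp h ▸ R.starProjection_apply_mem b)
    refine ⟨y, fun x _ => ?_⟩
    have hyb : ⟪y, b⟫ = ‖y‖ ^ 2 := by
      rw [← real_inner_self_eq_norm_sq, inner_sub_right y b, hyR _ (R.starProjection_apply_mem b),
        sub_zero]
    rw [hyR _ (LinearMap.mem_range_self A x), hyb]
    positivity

end Separation

section SelfDualCone

variable {E : Type*} [NormedAddCommGroup E] [InnerProductSpace ℝ E] {K : Set E}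

theorem inner_nonneg_of_selfDual (hK : {s : E | ∀ z ∈ K, 0 ≤ ⟪s, z⟫} = K) {s z : E}
    (hs : s ∈ K) (hz : z ∈ K) : 0 ≤ ⟪s, z⟫ :=
  (hK.symm ▸ hs : s ∈ {s : E | ∀ z ∈ K, 0 ≤ ⟪s, z⟫}) z hz

theorem neg_mem_and_nonneg_of_forall_interior_inner_le (hKconv : Convex ℝ K)
    (hKcone : ∀ z ∈ K, ∀ t : ℝ, 0 ≤ t → t • z ∈ K)
    (hK : {s : E | ∀ z ∈ K, 0 ≤ ⟪s, z⟫} = K) (hKint : (interior K).Nonempty) {q : E} {c : ℝ}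
    (h : ∀ x ∈ interior K, ⟪q, x⟫ ≤ c) : -q ∈ K ∧ 0 ≤ c := by
  have hle : ∀ z ∈ K, ⟪q, z⟫ ≤ c := by
    intro z hz
    have hzcl : z ∈ closure (interior K) :=
      hKconv.closure_interior_eq_closure_of_nonempty_interior hKint ▸ subset_closure hz
    have hclosed : IsClosed {x : E | ⟪q, x⟫ ≤ c} :=
      isClosed_le (continuous_const.inner continuous_id) continuous_const
    exact hclosed.closure_subset_iff.mpr h hzcl
  have hnonpos : ∀ z ∈ K, ⟪q, z⟫ ≤ 0 := fun z hz =>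
    nonpos_of_forall_nonneg_mul_le fun t ht => by
      simpa only [real_inner_smul_right] using hle _ (hKcone z hz t ht)
  obtain ⟨z₀, hz₀⟩ := hKint
  refine ⟨hK ▸ fun z hz => ?_, ?_⟩
  · simpa only [inner_neg_left, neg_nonneg] using hnonpos z hz
  · simpa using hle _ (hKcone z₀ (interior_subset hz₀) 0 le_rfl)

end SelfDualCone

section AuxiliaryProblem

variable {E F : Type*} [NormedAddCommGroup E] [InnerProductSpace ℝ E] [FiniteDimensional ℝ E]
  [NormedAddCommGroup F] [InnerProductSpace ℝ F] [FiniteDimensional ℝ F]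
  {K : Set E} {e : E} (A : E →ₗ[ℝ] F) (b : F)

/-- The objective values `t` over the feasible set of `(P^P_K)`. -/
def auxObjectiveValues (K : Set E) (e : E) : Set EReal :=
  {v : EReal | ∃ (y : F) (z : E) (t w : ℝ),
    z ∈ K ∧ 0 ≤ t ∧ 0 ≤ w ∧ ⟪b, y⟫ + t - w = 0 ∧ ⟪e, z⟫ + w = 1 ∧
    -((LinearMap.adjoint A) y) - z + t • e = 0 ∧ v = (t : EReal)}

theorem exists_pos_le_auxObjectiveValues (hK : {s : E | ∀ z ∈ K, 0 ≤ ⟪s, z⟫} = K)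
    (he : e ∈ K) {x : E} (hx : x ∈ interior K) (hAx : A x = b) :
    ∃ τ : ℝ, 0 < τ ∧ ∀ v ∈ auxObjectiveValues A b K e, (τ : EReal) ≤ v := by
  obtain ⟨ε, hε, hε1, hxε⟩ := exists_sub_smul_mem_of_mem_interior hx e
  have hxe : 0 ≤ ⟪x, e⟫ := inner_nonneg_of_selfDual hK (interior_subset hx) he
  refine ⟨ε / (1 + ⟪x, e⟫), by positivity, ?_⟩
  rintro _ ⟨y, z, t, w, hz, -, hw, hobj, hnorm, hslack, rfl⟩
  have hzeq : z = t • e - LinearMap.adjoint A y := by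
    rw [← sub_eq_zero, ← neg_eq_zero, ← hslack]; abel
  have hxz : ⟪x, z⟫ = t * ⟪x, e⟫ - ⟪b, y⟫ := by
    rw [hzeq, inner_sub_right, real_inner_smul_right, LinearMap.adjoint_inner_right, hAx]
  have hεz : ε * ⟪e, z⟫ ≤ ⟪x, z⟫ := by
    have := inner_nonneg_of_selfDual hK hxε hz
    rwa [inner_sub_left, real_inner_smul_left, sub_nonneg] at this
  have hbound : ε ≤ t * (1 + ⟪x, e⟫) := by nlinarith
  exact_mod_cast (div_le_iff₀ (by positivity)).mpr hbound

theorem exists_neg_adjoint_mem_of_not_exists_mem_interior (hKconv : Convex ℝ K)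
    (hKcone : ∀ z ∈ K, ∀ t : ℝ, 0 ≤ t → t • z ∈ K)
    (hK : {s : E | ∀ z ∈ K, 0 ≤ ⟪s, z⟫} = K) (he : e ∈ interior K)
    (hns : ¬∃ x ∈ interior K, A x = b) :
    ∃ y : F, -LinearMap.adjoint A y ∈ K ∧ 0 ≤ ⟪b, y⟫ ∧ ⟪e, LinearMap.adjoint A y⟫ < ⟪b, y⟫ := by
  obtain ⟨y, hy⟩ := exists_inner_lt_of_notMem_image A isOpen_interior hKconv.interior
    fun ⟨x, hx, hAx⟩ => hns ⟨x, hx, hAx⟩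
  have hsep : ∀ x ∈ interior K, ⟪LinearMap.adjoint A y, x⟫ < ⟪b, y⟫ := fun x hx => by
    rw [LinearMap.adjoint_inner_left, real_inner_comm y b]
    exact hy x hx
  obtain ⟨hyK, hby⟩ := neg_mem_and_nonneg_of_forall_interior_inner_le hKconv hKcone hK ⟨e, he⟩
    fun x hx => (hsep x hx).le
  exact ⟨y, hyK, hby, real_inner_comm e _ ▸ hsep e he⟩

theorem zero_mem_auxObjectiveValues (hKcone : ∀ z ∈ K, ∀ t : ℝ, 0 ≤ t → t • z ∈ K) {y : F}
    (hyK : -LinearMap.adjoint A y ∈ K) (hby : 0 ≤ ⟪b, y⟫)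
    (hlt : ⟪e, LinearMap.adjoint A y⟫ < ⟪b, y⟫) :
    (0 : EReal) ∈ auxObjectiveValues A b K e := by
  -- `(y, -A*y, 0, ⟪b, y⟫)` scaled by `d⁻¹` so that `⟪e, z⟫ + w = 1`.
  set d := ⟪b, y⟫ - ⟪e, LinearMap.adjoint A y⟫
  have hd : 0 < d := sub_pos.mpr hlt
  refine ⟨d⁻¹ • y, d⁻¹ • -LinearMap.adjoint A y, 0, d⁻¹ * ⟪b, y⟫,
    hKcone _ hyK _ (inv_nonneg.mpr hd.le), le_rfl, by positivity, ?_, ?_, ?_, EReal.coe_zero.symm⟩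
  · rw [real_inner_smul_right]
    ring
  · rw [real_inner_smul_right, inner_neg_right, ← mul_add, neg_add_eq_sub, inv_mul_cancel₀ hd.ne']
  · rw [map_smul, zero_smul, add_zero, smul_neg, sub_neg_eq_add, neg_add_cancel]

theorem sInf_auxObjectiveValues_eq_zero_iff (hKconv : Convex ℝ K)
    (hKcone : ∀ z ∈ K, ∀ t : ℝ, 0 ≤ t → t • z ∈ K)
    (hK : {s : E | ∀ z ∈ K, 0 ≤ ⟪s, z⟫} = K) (he : e ∈ interior K) :
    sInf (auxObjectiveValues A b K e) = 0 ↔ ¬∃ x ∈ interior K, A x = b := by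
  constructor
  · rintro hinf ⟨x, hx, hAx⟩
    obtain ⟨τ, hτ, hle⟩ := exists_pos_le_auxObjectiveValues A b hK (interior_subset he) hx hAx
    have hτ0 : (τ : EReal) ≤ 0 := hinf ▸ le_sInf hle
    exact (EReal.coe_pos.mpr hτ).not_ge hτ0
  · intro hns
    obtain ⟨y, hyK, hby, hlt⟩ :=
      exists_neg_adjoint_mem_of_not_exists_mem_interior A b hKconv hKcone hK he hns
    refine le_antisymm (sInf_le (zero_mem_auxObjectiveValues A b hKcone hyK hby hlt)) (le_sInf ?_)
    rintro _ ⟨-, -, t, -, -, ht, -, -, -, -, rfl⟩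
    exact_mod_cast ht

theorem improvingRay_or_reducingDirection {y : F} {z : E} {w : ℝ} (hz : z ∈ K) (hw : 0 ≤ w)
    (hobj : ⟪b, y⟫ + 0 - w = 0) (hnorm : ⟪e, z⟫ + w = 1)
    (hslack : -LinearMap.adjoint A y - z + (0 : ℝ) • e = 0) :
    (-LinearMap.adjoint A y ∈ K ∧ 0 < ⟪b, y⟫) ∨
      (-LinearMap.adjoint A y ∈ K ∧ -LinearMap.adjoint A y ≠ 0 ∧ ⟪b, y⟫ = 0) := by
  rw [zero_smul, add_zero, sub_eq_zero] at hslack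
  rw [hslack]
  rcases hw.lt_or_eq with hw | rfl
  · exact Or.inl ⟨hz, by linarith⟩
  · refine Or.inr ⟨hz, ?_, by linarith⟩
    rintro rfl
    simp at hnorm

end AuxiliaryProblem

theorem stmt15_general {E : Type*} [NormedAddCommGroup E] [InnerProductSpace ℝ E]
    [FiniteDimensional ℝ E] {m : ℕ} (K : Set E) (e : E)
    (hKconv : Convex ℝ K)
    (hKcone : ∀ z ∈ K, ∀ t : ℝ, 0 ≤ t → t • z ∈ K)
    (hKselfdual : {s : E | ∀ z ∈ K, 0 ≤ ⟪s, z⟫} = K)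
    (he : e ∈ interior K)
    (A : E →ₗ[ℝ] EuclideanSpace ℝ (Fin m)) (b : EuclideanSpace ℝ (Fin m)) :
    (sInf {v : EReal | ∃ (y : EuclideanSpace ℝ (Fin m)) (z : E) (t w : ℝ),
        z ∈ K ∧ 0 ≤ t ∧ 0 ≤ w ∧ ⟪b, y⟫ + t - w = 0 ∧ ⟪e, z⟫ + w = 1 ∧
        -((LinearMap.adjoint A) y) - z + t • e = 0 ∧ v = (t : EReal)} = (0 : EReal) ↔
      ¬(∃ x ∈ interior K, A x = b)) ∧
    (∀ (y : EuclideanSpace ℝ (Fin m)) (z : E) (w : ℝ),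
      z ∈ K → 0 ≤ w → ⟪b, y⟫ + 0 - w = 0 → ⟪e, z⟫ + w = 1 →
      -((LinearMap.adjoint A) y) - z + (0 : ℝ) • e = 0 →
      (-((LinearMap.adjoint A) y) ∈ K ∧ 0 < ⟪b, y⟫) ∨
      (-((LinearMap.adjoint A) y) ∈ K ∧ -((LinearMap.adjoint A) y) ≠ 0 ∧ ⟪b, y⟫ = 0)) :=
  ⟨sInf_auxObjectiveValues_eq_zero_iff A b hKconv hKcone hKselfdual he,
    fun _ _ _ => improvingRay_or_reducingDirection A b⟩

/-- For the auxiliary problem `(P^P_K)`: `inf t` over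
`(y,z,t,w) ∈ ℝ^m × K × ℝ₊ × ℝ₊` with `b^⊤y + t − w = 0`, `⟨e,z⟩ + w = 1`,
`−A*y − z + te = 0`: the optimal value is zero iff (P) is not strongly feasible; and
every feasible solution with `t = 0` yields `(y,z)` which is either an improving ray of
(D) (`−A*y ∈ K`, `b^⊤y > 0`) or a reducing direction for (P) (`−A*y ∈ K \ {0}`,
`b^⊤y = 0`). -/
theorem stmt15 {E : Type*} [NormedAddCommGroup E] [InnerProductSpace ℝ E]
    [FiniteDimensional ℝ E] {m : ℕ} (K : Set E) (e : E)
    (hKclosed : IsClosed K) (hKconv : Convex ℝ K)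
    (hKcone : ∀ z ∈ K, ∀ t : ℝ, 0 ≤ t → t • z ∈ K)
    (hKselfdual : {s : E | ∀ z ∈ K, 0 ≤ ⟪s, z⟫} = K)
    (he : e ∈ interior K)
    (A : E →ₗ[ℝ] EuclideanSpace ℝ (Fin m)) (b : EuclideanSpace ℝ (Fin m)) :
    (sInf {v : EReal | ∃ (y : EuclideanSpace ℝ (Fin m)) (z : E) (t w : ℝ),
        z ∈ K ∧ 0 ≤ t ∧ 0 ≤ w ∧ ⟪b, y⟫ + t - w = 0 ∧ ⟪e, z⟫ + w = 1 ∧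
        -((LinearMap.adjoint A) y) - z + t • e = 0 ∧ v = (t : EReal)} = (0 : EReal) ↔
      ¬(∃ x ∈ interior K, A x = b)) ∧
    (∀ (y : EuclideanSpace ℝ (Fin m)) (z : E) (w : ℝ),
      z ∈ K → 0 ≤ w → ⟪b, y⟫ + 0 - w = 0 → ⟪e, z⟫ + w = 1 →
      -((LinearMap.adjoint A) y) - z + (0 : ℝ) • e = 0 →
      (-((LinearMap.adjoint A) y) ∈ K ∧ 0 < ⟪b, y⟫) ∨
      (-((LinearMap.adjoint A) y) ∈ K ∧ -((LinearMap.adjoint A) y) ≠ 0 ∧ ⟪b, y⟫ = 0)) :=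
  stmt15_general K e hKconv hKcone hKselfdual he A b
end

section
/- For the dual problem (D^P_K): sup x₂ over (x₁,x₂,x₃) with Ax₃ − x₁b = 0, 1 − x₁ − ⟨e,x₃⟩ ≥ 0, x₁ − x₂ ≥ 0, x₃ − x₂e ∈ K: if (x₁*,x₂*,x₃*) is an optimal solution with x₂* > 0, then x₁* > 0, x₃* ∈ int K, and (1/x₁*)x₃* is a strictly feasible solution of (P). -/
lemma smul_interior_mem {E : Type*} [NormedAddCommGroup E] [NormedSpace ℝ E]
    (K : Set E) (hKcone : ∀ z ∈ K, ∀ t : ℝ, 0 ≤ t → t • z ∈ K)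
    {u : E} (hu : u ∈ interior K) {t : ℝ} (ht : 0 < t) : t • u ∈ interior K := by
  have hmap : (t • ·) '' interior K ⊆ K := by
    rintro _ ⟨z, hz, rfl⟩
    exact hKcone z (interior_subset hz) t ht.le
  have hopen : IsOpen ((t • ·) '' interior K) :=
    (isOpenMap_smul₀ ht.ne') _ isOpen_interior
  exact interior_maximal hmap hopen ⟨u, hu, rfl⟩

lemma add_cone_interior_mem {E : Type*} [NormedAddCommGroup E] [NormedSpace ℝ E]
    (K : Set E) (hKconv : Convex ℝ K)
    (hKcone : ∀ z ∈ K, ∀ t : ℝ, 0 ≤ t → t • z ∈ K)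
    {u v : E} (hu : u ∈ interior K) (hv : v ∈ K) : u + v ∈ interior K := by
  have hadd : ∀ a ∈ K, ∀ b ∈ K, a + b ∈ K := by
    intro a ha b hb
    have h := hKconv ha hb (by norm_num : (0:ℝ) ≤ 1/2) (by norm_num : (0:ℝ) ≤ 1/2) (by norm_num)
    have h2 := hKcone _ h 2 (by norm_num)
    have : (2:ℝ) • ((1/2:ℝ) • a + (1/2:ℝ) • b) = a + b := by
      rw [smul_add, smul_smul, smul_smul]; norm_num
    rwa [this] at h2
  have hmap : (· + v) '' interior K ⊆ K := by
    rintro _ ⟨z, hz, rfl⟩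
    exact hadd z (interior_subset hz) v hv
  have hopen : IsOpen ((· + v) '' interior K) :=
    (Homeomorph.addRight v).isOpenMap _ isOpen_interior
  exact interior_maximal hmap hopen ⟨u, hu, rfl⟩


open scoped RealInnerProductSpace

/-- For the dual auxiliary problem `(D^P_K)`: `sup x₂` over
`(x₁,x₂,x₃)` with `Ax₃ − x₁b = 0`, `1 − x₁ − ⟨e,x₃⟩ ≥ 0`, `x₁ − x₂ ≥ 0`, `x₃ − x₂e ∈ K`:
if `(x₁,x₂,x₃)` is an optimal solution with `x₂ > 0`, then `x₁ > 0`, `x₃ ∈ int K`, and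
`(1/x₁)x₃` is a strictly feasible solution of (P). -/
theorem stmt16 {E : Type*} [NormedAddCommGroup E] [InnerProductSpace ℝ E]
    [FiniteDimensional ℝ E] {m : ℕ} (K : Set E) (e : E)
    (hKclosed : IsClosed K) (hKconv : Convex ℝ K)
    (hKcone : ∀ z ∈ K, ∀ t : ℝ, 0 ≤ t → t • z ∈ K)
    (he : e ∈ interior K)
    (A : E →ₗ[ℝ] EuclideanSpace ℝ (Fin m)) (b : EuclideanSpace ℝ (Fin m))
    (x₁ x₂ : ℝ) (x₃ : E)
    (hfeas1 : A x₃ - x₁ • b = 0)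
    (hfeas2 : 0 ≤ 1 - x₁ - ⟪e, x₃⟫)
    (hfeas3 : 0 ≤ x₁ - x₂)
    (hfeas4 : x₃ - x₂ • e ∈ K)
    (hopt : ∀ (y₁ y₂ : ℝ) (y₃ : E), A y₃ - y₁ • b = 0 → 0 ≤ 1 - y₁ - ⟪e, y₃⟫ →
      0 ≤ y₁ - y₂ → y₃ - y₂ • e ∈ K → y₂ ≤ x₂)
    (hx₂ : 0 < x₂) :
    0 < x₁ ∧ x₃ ∈ interior K ∧ A (x₁⁻¹ • x₃) = b ∧ x₁⁻¹ • x₃ ∈ interior K := by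
  have hx₁ : 0 < x₁ := lt_of_lt_of_le hx₂ (by linarith)
  have hx₃ : x₃ ∈ interior K := by
    have h1 : x₂ • e ∈ interior K := smul_interior_mem K hKcone he hx₂
    have h2 := add_cone_interior_mem K hKconv hKcone h1 hfeas4
    rwa [add_sub_cancel] at h2
  refine ⟨hx₁, hx₃, ?_, smul_interior_mem K hKcone hx₃ (by positivity)⟩
  have hA : A x₃ = x₁ • b := by
    have := sub_eq_zero.mp hfeas1; exact this
  rw [map_smul, hA, smul_smul, inv_mul_cancel₀ hx₁.ne', one_smul]
end

section
/- In the problem (P̄^P_K): inf α over (α,β,γ,s) ∈ ℝ₊ × ℝ₊ × ℝ₊ × K subject to −α + β + γ + ⟨e,s⟩ = 0 and (α/(1+⟨e,e⟩))(b − Ae) − γb + As = (1/(1+⟨e,e⟩))(b − Ae): for any feasible solution with α < 1, the point (1+⟨e,e⟩)/(γ(1+⟨e,e⟩) + 1 − α) · ( s + ((1−α)/(1+⟨e,e⟩)) e ) is a strictly feasible solution of the system Ax = b, x ∈ int K. -/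
open scoped RealInnerProductSpace Pointwise

/-!
With `r = (1 - α) / (1 + ⟪e, e⟫) > 0`, the equality constraint rearranges to
`A (s + r • e) = (γ + r) • b`, and the prefactor of the point is exactly `(γ + r)⁻¹`.
Since `K` is a convex cone, `s + r • e` lies in `K + interior K ⊆ interior K`, and positive
scaling preserves `interior K`.
-/

theorem Convex.add_mem_of_smul_mem {𝕜 E : Type*} [Field 𝕜] [LinearOrder 𝕜]
    [IsStrictOrderedRing 𝕜] [AddCommGroup E] [Module 𝕜 E] {K : Set E} (hKconv : Convex 𝕜 K)
    (hKcone : ∀ z ∈ K, ∀ t : 𝕜, 0 ≤ t → t • z ∈ K) {x y : E} (hx : x ∈ K) (hy : y ∈ K) :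
    x + y ∈ K := by
  have hmid : (2⁻¹ : 𝕜) • x + (2⁻¹ : 𝕜) • y ∈ K :=
    hKconv hx hy (by positivity) (by positivity) (by norm_num)
  have hdouble : (2 : 𝕜) • ((2⁻¹ : 𝕜) • x + (2⁻¹ : 𝕜) • y) = x + y := by
    rw [smul_add, smul_smul, smul_smul, mul_inv_cancel₀ two_ne_zero, one_smul, one_smul]
  simpa only [hdouble] using hKcone _ hmid 2 zero_le_two

theorem add_mem_interior_of_add_mem {E : Type*} [AddGroup E] [TopologicalSpace E]
    [ContinuousConstVAdd E E] {K : Set E} (hadd : ∀ x ∈ K, ∀ y ∈ K, x + y ∈ K) {x y : E}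
    (hx : x ∈ K) (hy : y ∈ interior K) : x + y ∈ interior K :=
  interior_mono (Set.add_subset_iff.2 hadd) (subset_interior_add_right (Set.add_mem_add hx hy))

theorem smul_mem_interior_of_smul_mem {𝕜 E : Type*} [GroupWithZero 𝕜] [PartialOrder 𝕜]
    [TopologicalSpace E] [MulAction 𝕜 E] [ContinuousConstSMul 𝕜 E] {K : Set E}
    (hKcone : ∀ z ∈ K, ∀ t : 𝕜, 0 ≤ t → t • z ∈ K) {t : 𝕜} (ht : 0 < t) {x : E}
    (hx : x ∈ interior K) : t • x ∈ interior K := by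
  have hmem : t • x ∈ interior (t • K) := by
    rw [interior_smul₀ ht.ne']
    exact Set.smul_mem_smul_set hx
  exact interior_mono (Set.smul_set_subset_iff.2 fun z hz => hKcone z hz t ht.le) hmem

theorem LinearMap.map_add_smul_eq_smul_of_feasible {𝕜 V W : Type*} [Field 𝕜] [AddCommGroup V]
    [Module 𝕜 V] [AddCommGroup W] [Module 𝕜 W] (A : V →ₗ[𝕜] W) (b : W) (e s : V) (α γ c : 𝕜)
    (h : (α / c) • (b - A e) - γ • b + A s = c⁻¹ • (b - A e)) :
    A (s + ((1 - α) / c) • e) = (γ + (1 - α) / c) • b := by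
  have hr : (1 - α) / c = c⁻¹ - α / c := by ring
  rw [map_add, map_smul, hr]
  linear_combination (norm := module) h

theorem stmt18_general {E : Type*} [NormedAddCommGroup E] [InnerProductSpace ℝ E]
    {m : ℕ} (K : Set E) (e : E)
    (hKconv : Convex ℝ K)
    (hKcone : ∀ z ∈ K, ∀ t : ℝ, 0 ≤ t → t • z ∈ K)
    (he : e ∈ interior K)
    (A : E →ₗ[ℝ] EuclideanSpace ℝ (Fin m)) (b : EuclideanSpace ℝ (Fin m))
    (α γ : ℝ) (s : E)
    (hγ : 0 ≤ γ) (hs : s ∈ K)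
    (hc2 : (α / (1 + ⟪e, e⟫)) • (b - A e) - γ • b + A s = (1 + ⟪e, e⟫)⁻¹ • (b - A e))
    (hα1 : α < 1) :
    A (((1 + ⟪e, e⟫) / (γ * (1 + ⟪e, e⟫) + 1 - α)) •
        (s + ((1 - α) / (1 + ⟪e, e⟫)) • e)) = b ∧
      ((1 + ⟪e, e⟫) / (γ * (1 + ⟪e, e⟫) + 1 - α)) •
        (s + ((1 - α) / (1 + ⟪e, e⟫)) • e) ∈ interior K := by
  set c : ℝ := 1 + ⟪e, e⟫
  have hc : 0 < c := by linarith [real_inner_self_nonneg (x := e)]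
  have hr : 0 < (1 - α) / c := div_pos (sub_pos.2 hα1) hc
  have hd : 0 < γ * c + 1 - α := by nlinarith
  have hscale : c / (γ * c + 1 - α) * (γ + (1 - α) / c) = 1 := by
    rw [div_mul_eq_mul_div, div_eq_one_iff_eq hd.ne', mul_add, mul_div_cancel₀ _ hc.ne']
    ring
  refine ⟨?_, ?_⟩
  · rw [map_smul, A.map_add_smul_eq_smul_of_feasible b e s α γ c hc2, smul_smul, hscale, one_smul]
  · have hshift : s + ((1 - α) / c) • e ∈ interior K :=
      add_mem_interior_of_add_mem (fun _ hx _ hy => hKconv.add_mem_of_smul_mem hKcone hx hy) hs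
        (smul_mem_interior_of_smul_mem hKcone hr he)
    exact smul_mem_interior_of_smul_mem hKcone (div_pos hc hd) hshift

/-- In the problem `(P̄^P_K)` with variables
`(α,β,γ,s) ∈ ℝ₊ × ℝ₊ × ℝ₊ × K` and constraints `−α + β + γ + ⟨e,s⟩ = 0` and
`(α/(1+⟨e,e⟩))(b − Ae) − γb + As = (1/(1+⟨e,e⟩))(b − Ae)`: any feasible solution with
`α < 1` yields the strictly feasible point
`((1+⟨e,e⟩)/(γ(1+⟨e,e⟩)+1−α)) • (s + ((1−α)/(1+⟨e,e⟩)) e)` of the system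
`Ax = b`, `x ∈ int K`. -/
theorem stmt18 {E : Type*} [NormedAddCommGroup E] [InnerProductSpace ℝ E]
    [FiniteDimensional ℝ E] {m : ℕ} (K : Set E) (e : E)
    (hKclosed : IsClosed K) (hKconv : Convex ℝ K)
    (hKcone : ∀ z ∈ K, ∀ t : ℝ, 0 ≤ t → t • z ∈ K)
    (he : e ∈ interior K)
    (A : E →ₗ[ℝ] EuclideanSpace ℝ (Fin m)) (b : EuclideanSpace ℝ (Fin m))
    (α β γ : ℝ) (s : E)
    (hα : 0 ≤ α) (hβ : 0 ≤ β) (hγ : 0 ≤ γ) (hs : s ∈ K)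
    (hc1 : -α + β + γ + ⟪e, s⟫ = 0)
    (hc2 : (α / (1 + ⟪e, e⟫)) • (b - A e) - γ • b + A s = (1 + ⟪e, e⟫)⁻¹ • (b - A e))
    (hα1 : α < 1) :
    A (((1 + ⟪e, e⟫) / (γ * (1 + ⟪e, e⟫) + 1 - α)) •
        (s + ((1 - α) / (1 + ⟪e, e⟫)) • e)) = b ∧
      ((1 + ⟪e, e⟫) / (γ * (1 + ⟪e, e⟫) + 1 - α)) •
        (s + ((1 - α) / (1 + ⟪e, e⟫)) • e) ∈ interior K :=
  stmt18_general K e hKconv hKcone he A b α γ s hγ hs hc2 hα1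
end
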